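/- arXiv:2309.17276 — 7 statements merged into one kernel-verified Lean document; each statement's English description precedes it below -/
import Mathlib

section
/- Let β > 0 and let Y¹, Y² : ℝ → ℝ be continuous with Y¹(0) = Y²(0) = 0, such that lim_{x→−∞} Y¹(x)/x = a and lim_{x→−∞} Y²(x)/x = b with a < b. Then lim_{y→−∞} (1/y) log ∫_{-∞}^y exp(β(Y²(x) − Y¹(x))) dx = β(b − a). Consequently, D_β(Y¹,Y²)(x)/x → b and R_β(Y¹,Y²)(x)/x → a as x → −∞. -/
open MeasureTheory Real Filter

/-- The positive-temperature queueing map `Q_β`. -/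
noncomputable def Qmap (β : ℝ) (B Y : ℝ → ℝ) (y : ℝ) : ℝ :=
  β⁻¹ * Real.log (∫ x in Set.Iio y, Real.exp (β * ((B y - B x) - (Y y - Y x))))

/-- The departure map `D_β`. -/
noncomputable def Dmap (β : ℝ) (B Y : ℝ → ℝ) (y : ℝ) : ℝ :=
  Y y + Qmap β B Y y - Qmap β B Y 0

/-- The map `R_β`. -/
noncomputable def Rmap (β : ℝ) (B Y : ℝ → ℝ) (y : ℝ) : ℝ :=
  B y + Qmap β B Y 0 - Qmap β B Y y


lemma intInt_exp_mul (k A B : ℝ) (hk : k ≠ 0) :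
    ∫ x in A..B, Real.exp (k * x) = (Real.exp (k * B) - Real.exp (k * A)) / k := by
  have D : ∀ x : ℝ, HasDerivAt (fun y : ℝ => Real.exp (k * y) / k) (Real.exp (k * x)) x := by
    intro x
    have h1 : HasDerivAt (fun y : ℝ => k * y) k x := by
      simpa using (hasDerivAt_id x).const_mul k
    have h2 := (h1.exp).div_const k
    simpa [mul_div_assoc, mul_div_cancel_right₀ _ hk] using h2
  rw [intervalIntegral.integral_eq_sub_of_hasDerivAt (fun x _ => D x)
    ((Real.continuous_exp.comp (continuous_const.mul continuous_id)).intervalIntegrable A B)]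
  ring

lemma integrableOn_exp_mul_Iic' (k y : ℝ) (hk : 0 < k) :
    IntegrableOn (fun x => Real.exp (k * x)) (Set.Iic y) := by
  refine integrableOn_Iic_of_intervalIntegral_norm_bounded (Real.exp (k * y) / k) y
    (fun i => ((Real.continuous_exp.comp (continuous_const.mul continuous_id)).integrableOn_Ioc))
    tendsto_id ?_
  filter_upwards [eventually_le_atBot y] with A hA
  have hn : ∀ x : ℝ, ‖Real.exp (k * x)‖ = Real.exp (k * x) :=
    fun x => norm_of_nonneg (Real.exp_pos _).le
  simp only [id_eq, hn, intInt_exp_mul k A y hk.ne']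
  have : 0 < Real.exp (k * A) := Real.exp_pos _
  rw [div_le_div_iff_of_pos_right hk]
  linarith

lemma integral_exp_mul_Iio (k y : ℝ) (hk : 0 < k) :
    ∫ x in Set.Iio y, Real.exp (k * x) = Real.exp (k * y) / k := by
  rw [setIntegral_congr_set (Iio_ae_eq_Iic)]
  refine tendsto_nhds_unique
    (intervalIntegral_tendsto_integral_Iic _ (integrableOn_exp_mul_Iic' k y hk) tendsto_id) ?_
  have : Tendsto (fun A : ℝ => (Real.exp (k * y) - Real.exp (k * A)) / k) atBot
      (nhds ((Real.exp (k * y) - 0) / k)) := by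
    refine Tendsto.div_const ?_ _
    exact tendsto_const_nhds.sub
      (Real.tendsto_exp_atBot.comp (tendsto_const_mul_atBot_of_pos hk |>.mpr tendsto_id))
  simpa [intInt_exp_mul k _ y hk.ne'] using this

lemma bounds {g : ℝ → ℝ} (hg : Continuous g) {c δ : ℝ} (hδ : 0 < δ) (hδc : δ < c)
    (h : Tendsto (fun x => g x / x) atBot (nhds c)) :
    ∀ᶠ y in atBot,
      (IntegrableOn (fun x => Real.exp (g x)) (Set.Iio y)) ∧
      Real.exp ((c + δ) * (y - 1)) ≤ (∫ x in Set.Iio y, Real.exp (g x)) ∧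
      (∫ x in Set.Iio y, Real.exp (g x)) ≤ Real.exp ((c - δ) * y) / (c - δ) := by
  have hcδ : 0 < c - δ := by linarith
  obtain ⟨M, hM⟩ := eventually_atBot.1
    ((Metric.tendsto_nhds.1 h δ hδ).and (eventually_lt_atBot (0 : ℝ)))
  -- for x ≤ M : (c+δ)*x ≤ g x ≤ (c-δ)*x
  have hbnd : ∀ x ≤ M, (c + δ) * x ≤ g x ∧ g x ≤ (c - δ) * x := by
    intro x hx
    obtain ⟨hd, hx0⟩ := hM x hx
    rw [Real.dist_eq, abs_lt] at hd
    have h1 : g x / x < c + δ := by linarith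
    have h2 : c - δ < g x / x := by linarith
    constructor
    · nlinarith [(div_lt_iff_of_neg hx0).1 h1]
    · nlinarith [(lt_div_iff_of_neg hx0).1 h2]
  filter_upwards [eventually_le_atBot M] with y hy
  have hyM : ∀ x < y, (c + δ) * x ≤ g x ∧ g x ≤ (c - δ) * x :=
    fun x hx => hbnd x (le_of_lt (lt_of_lt_of_le hx hy))
  have hint : IntegrableOn (fun x => Real.exp (g x)) (Set.Iio y) := by
    refine Integrable.mono' ((integrableOn_exp_mul_Iic' (c - δ) y hcδ).mono Set.Iio_subset_Iic_self le_rfl)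
      ((Real.continuous_exp.comp hg).aestronglyMeasurable) ?_
    filter_upwards [ae_restrict_mem measurableSet_Iio] with x hx
    rw [norm_of_nonneg (Real.exp_pos _).le]
    exact Real.exp_le_exp.2 (hyM x hx).2
  refine ⟨hint, ?_, ?_⟩
  · -- lower bound
    have hsub : ∫ x in Set.Ioo (y - 1) y, Real.exp (g x) ≤ ∫ x in Set.Iio y, Real.exp (g x) := by
      refine setIntegral_mono_set hint ?_ ?_
      · filter_upwards with x using (Real.exp_pos _).le
      · exact Filter.Eventually.of_forall (fun x hx => hx.2)
    have hconst : Real.exp ((c + δ) * (y - 1)) * (volume (Set.Ioo (y - 1) y)).toReal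
        ≤ ∫ x in Set.Ioo (y - 1) y, Real.exp (g x) := by
      refine setIntegral_ge_of_const_le_real measurableSet_Ioo (by simp) ?_
        (hint.mono (fun x hx => hx.2) le_rfl)
      intro x hx
      refine Real.exp_le_exp.2 (le_trans ?_ (hyM x hx.2).1)
      have : 0 < c + δ := by linarith
      nlinarith [hx.1]
    have hvol : (volume (Set.Ioo (y - 1) y)).toReal = 1 := by
      rw [Real.volume_Ioo]
      norm_num
    rw [hvol, mul_one] at hconst
    linarith
  · -- upper bound
    rw [← integral_exp_mul_Iio (c - δ) y hcδ]
    refine setIntegral_mono_on hint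
      ((integrableOn_exp_mul_Iic' (c - δ) y hcδ).mono Set.Iio_subset_Iic_self le_rfl)
      measurableSet_Iio ?_
    intro x hx
    exact Real.exp_le_exp.2 (hyM x hx).2

lemma const_div_atBot (C : ℝ) : Tendsto (fun y : ℝ => C / y) atBot (nhds 0) := by
  have h1 : Tendsto (fun y : ℝ => (-y)⁻¹) atBot (nhds 0) :=
    tendsto_inv_atTop_zero.comp tendsto_neg_atBot_atTop
  have h2 := h1.const_mul (-C)
  rw [mul_zero] at h2
  refine h2.congr (fun y => ?_)
  rw [div_eq_mul_inv, inv_neg]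
  ring

lemma key {g : ℝ → ℝ} (hg : Continuous g) {c : ℝ} (hc : 0 < c)
    (h : Tendsto (fun x => g x / x) atBot (nhds c)) :
    Tendsto (fun y => (1 / y) * Real.log (∫ x in Set.Iio y, Real.exp (g x)))
      atBot (nhds c) := by
  rw [Metric.tendsto_nhds]
  intro ε hε
  set δ : ℝ := min (ε / 4) (c / 2) with hδdef
  have hδ : 0 < δ := lt_min (by linarith) (by linarith)
  have hδc : δ < c := lt_of_le_of_lt (min_le_right _ _) (by linarith)
  have hδε : δ ≤ ε / 4 := min_le_left _ _
  have hcδ : 0 < c - δ := by linarith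
  have e2 := Metric.tendsto_nhds.1 (const_div_atBot (c + δ)) (ε / 4) (by linarith)
  have e3 := Metric.tendsto_nhds.1 (const_div_atBot (Real.log (c - δ))) (ε / 4) (by linarith)
  filter_upwards [bounds hg hδ hδc h, e2, e3, eventually_lt_atBot (0 : ℝ)] with y hb h2 h3 hy0
  obtain ⟨hI, hlo, hup⟩ := hb
  set I := ∫ x in Set.Iio y, Real.exp (g x) with hIdef
  have hIpos : 0 < I := lt_of_lt_of_le (Real.exp_pos _) hlo
  have hlog_lo : (c + δ) * (y - 1) ≤ Real.log I := (Real.le_log_iff_exp_le hIpos).2 hlo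
  have hlog_up : Real.log I ≤ (c - δ) * y - Real.log (c - δ) := by
    have := Real.log_le_log hIpos hup
    rwa [Real.log_div (Real.exp_ne_zero _) hcδ.ne', Real.log_exp] at this
  have hyinv : (1 : ℝ) / y ≤ 0 := by
    apply div_nonpos_of_nonneg_of_nonpos <;> linarith
  have hA : (1 / y) * Real.log I ≤ (1 / y) * ((c + δ) * (y - 1)) :=
    mul_le_mul_of_nonpos_left hlog_lo hyinv
  have hB : (1 / y) * ((c - δ) * y - Real.log (c - δ)) ≤ (1 / y) * Real.log I :=
    mul_le_mul_of_nonpos_left hlog_up hyinv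
  have hy0' : y ≠ 0 := hy0.ne
  have eA : (1 / y) * ((c + δ) * (y - 1)) = (c + δ) - (c + δ) / y := by
    field_simp; try ring
  have eB : (1 / y) * ((c - δ) * y - Real.log (c - δ)) = (c - δ) - Real.log (c - δ) / y := by
    field_simp; try ring
  rw [eA] at hA
  rw [eB] at hB
  rw [Real.dist_eq, sub_zero] at h2 h3
  rw [Real.dist_eq, abs_lt]
  obtain ⟨h2a, h2b⟩ := abs_lt.1 h2
  obtain ⟨h3a, h3b⟩ := abs_lt.1 h3
  constructor <;> [linarith; linarith]

theorem stmt1 (β : ℝ) (hβ : 0 < β) (Y₁ Y₂ : ℝ → ℝ)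
    (hc₁ : Continuous Y₁) (hc₂ : Continuous Y₂)
    (hY₁0 : Y₁ 0 = 0) (hY₂0 : Y₂ 0 = 0) (a b : ℝ) (hab : a < b)
    (ha : Tendsto (fun x => Y₁ x / x) atBot (nhds a))
    (hb : Tendsto (fun x => Y₂ x / x) atBot (nhds b)) :
    Tendsto (fun y => (1 / y) *
        Real.log (∫ x in Set.Iio y, Real.exp (β * (Y₂ x - Y₁ x)))) atBot
        (nhds (β * (b - a))) ∧
    Tendsto (fun x => Dmap β Y₁ Y₂ x / x) atBot (nhds b) ∧
    Tendsto (fun x => Rmap β Y₁ Y₂ x / x) atBot (nhds a) := by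
  have hgc : Continuous (fun x => β * (Y₂ x - Y₁ x)) :=
    continuous_const.mul (hc₂.sub hc₁)
  have hc : 0 < β * (b - a) := mul_pos hβ (sub_pos.2 hab)
  have hgl : Tendsto (fun x => (β * (Y₂ x - Y₁ x)) / x) atBot (nhds (β * (b - a))) := by
    refine ((hb.sub ha).const_mul β).congr (fun x => ?_)
    rw [← sub_div, mul_div_assoc]
  have hkey := key hgc hc hgl
  refine ⟨hkey, ?_, ?_⟩
  all_goals {
    have hδ : (0:ℝ) < β * (b - a) / 2 := by linarith
    have hδc : β * (b - a) / 2 < β * (b - a) := by linarith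
    have hQ : ∀ᶠ y in atBot, Qmap β Y₁ Y₂ y =
        (Y₁ y - Y₂ y) + β⁻¹ * Real.log (∫ x in Set.Iio y, Real.exp (β * (Y₂ x - Y₁ x))) := by
      filter_upwards [bounds hgc hδ hδc hgl] with y hby
      obtain ⟨hI, hlo, _⟩ := hby
      have hIpos : 0 < ∫ x in Set.Iio y, Real.exp (β * (Y₂ x - Y₁ x)) :=
        lt_of_lt_of_le (Real.exp_pos _) hlo
      have hpt : ∀ x : ℝ, Real.exp (β * ((Y₁ y - Y₁ x) - (Y₂ y - Y₂ x))) =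
          Real.exp (β * (Y₁ y - Y₂ y)) * Real.exp (β * (Y₂ x - Y₁ x)) := by
        intro x
        rw [← Real.exp_add]
        congr 1
        ring
      rw [Qmap]
      simp_rw [hpt]
      rw [integral_const_mul, Real.log_mul (Real.exp_ne_zero _) hIpos.ne', Real.log_exp,
        mul_add, ← mul_assoc, inv_mul_cancel₀ hβ.ne', one_mul]
    first
    | -- Dmap
      (have T : Tendsto (fun y => Y₁ y / y + β⁻¹ * ((1 / y) *
          Real.log (∫ x in Set.Iio y, Real.exp (β * (Y₂ x - Y₁ x)))) +
          (-(Qmap β Y₁ Y₂ 0)) / y) atBot (nhds (a + β⁻¹ * (β * (b - a)) + 0)) :=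
        (ha.add (hkey.const_mul β⁻¹)).add (const_div_atBot _)
       have hval : a + β⁻¹ * (β * (b - a)) + 0 = b := by rw [← mul_assoc, inv_mul_cancel₀ hβ.ne', one_mul]; ring
       rw [hval] at T
       refine T.congr' ?_
       filter_upwards [hQ, eventually_ne_atBot (0:ℝ)] with y hQy hy0
       rw [Dmap, hQy]
       field_simp
       ring)
    | -- Rmap
      (have T : Tendsto (fun y => Y₂ y / y - β⁻¹ * ((1 / y) *
          Real.log (∫ x in Set.Iio y, Real.exp (β * (Y₂ x - Y₁ x)))) +
          (Qmap β Y₁ Y₂ 0) / y) atBot (nhds (b - β⁻¹ * (β * (b - a)) + 0)) :=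
        (hb.sub (hkey.const_mul β⁻¹)).add (const_div_atBot _)
       have hval : b - β⁻¹ * (β * (b - a)) + 0 = a := by rw [← mul_assoc, inv_mul_cancel₀ hβ.ne', one_mul]; ring
       rw [hval] at T
       refine T.congr' ?_
       filter_upwards [hQ, eventually_ne_atBot (0:ℝ)] with y hQy hy0
       rw [Rmap, hQy]
       field_simp
       ring)
  }
end

section
/- Let β > 0 and let B, Y, Y' : ℝ → ℝ be functions with B(0)=Y(0)=Y'(0)=0 such that the relevant integrals are finite, and suppose Y(x,y) ≤ Y'(x,y) for all x < y (increment ordering). Then B(x,y) < D_β(B,Y)(x,y) ≤ D_β(B,Y')(x,y) for all x < y. Moreover, if Y(x,y) < Y'(x,y) for all x < y, then D_β(B,Y)(x,y) < D_β(B,Y')(x,y) for all x < y. -/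
open MeasureTheory Real


section aux

variable (β : ℝ)

private noncomputable def Jf (B Z : ℝ → ℝ) (t : ℝ) : ℝ :=
  ∫ x in Set.Iio t, Real.exp (β * (Z x - B x))

lemma exp_setIntegral_pos {B Z : ℝ → ℝ}
    (h : IntegrableOn (fun x => Real.exp (β * (Z x - B x))) s)
    (hs : MeasurableSet s) (hpos : 0 < volume s) :
    0 < ∫ x in s, Real.exp (β * (Z x - B x)) := by
  rw [setIntegral_pos_iff_support_of_nonneg_ae (Filter.Eventually.of_forall
    (fun x => (Real.exp_pos _).le)) h]
  have : (Function.support fun x => Real.exp (β * (Z x - B x))) = Set.univ := by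
    ext x; simp [Function.support, Real.exp_ne_zero]
  rwa [this, Set.univ_inter]

lemma Jf_pos {B Z : ℝ → ℝ}
    (hInt : ∀ y : ℝ, IntegrableOn (fun x => Real.exp (β * (Z x - B x))) (Set.Iio y))
    (t : ℝ) : 0 < Jf β B Z t :=
  exp_setIntegral_pos β (hInt t) measurableSet_Iio (by simp)

lemma Jf_split {B Z : ℝ → ℝ}
    (hInt : ∀ y : ℝ, IntegrableOn (fun x => Real.exp (β * (Z x - B x))) (Set.Iio y))
    {x y : ℝ} (hxy : x < y) :
    Jf β B Z y = Jf β B Z x + ∫ z in Set.Ico x y, Real.exp (β * (Z z - B z)) := by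
  rw [Jf, Jf, ← Set.Iio_union_Ico_eq_Iio hxy.le,
    setIntegral_union (by rw [Set.disjoint_left]; intro a ha hb; exact absurd hb.1 (not_le.2 ha)) measurableSet_Ico
      ((hInt y).mono_set (Set.Iio_subset_Iio hxy.le))
      ((hInt y).mono_set (Set.Ico_subset_Iio_self))]

lemma Qmap_eq {B Z : ℝ → ℝ} (hβ : 0 < β)
    (hInt : ∀ y : ℝ, IntegrableOn (fun x => Real.exp (β * (Z x - B x))) (Set.Iio y))
    (t : ℝ) :
    Qmap β B Z t = (B t - Z t) + β⁻¹ * Real.log (Jf β B Z t) := by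
  have h1 : ∀ x : ℝ, Real.exp (β * ((B t - B x) - (Z t - Z x)))
      = Real.exp (β * (B t - Z t)) * Real.exp (β * (Z x - B x)) := by
    intro x; rw [← Real.exp_add]; ring_nf
  have hp := Jf_pos β hInt t
  rw [Jf] at hp
  rw [Qmap, Jf]
  simp_rw [h1]
  rw [integral_const_mul, Real.log_mul (Real.exp_ne_zero _) hp.ne', Real.log_exp]
  field_simp

lemma Dmap_sub {B Z : ℝ → ℝ} (hβ : 0 < β)
    (hInt : ∀ y : ℝ, IntegrableOn (fun x => Real.exp (β * (Z x - B x))) (Set.Iio y))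
    (x y : ℝ) :
    Dmap β B Z y - Dmap β B Z x
      = (B y - B x) + β⁻¹ * (Real.log (Jf β B Z y) - Real.log (Jf β B Z x)) := by
  simp only [Dmap, Qmap_eq β hβ hInt]
  ring

end aux

theorem stmt2 (β : ℝ) (hβ : 0 < β) (B Y Y' : ℝ → ℝ)
    (hB0 : B 0 = 0) (hY0 : Y 0 = 0) (hY'0 : Y' 0 = 0)
    (hIntY : ∀ y : ℝ, IntegrableOn (fun x => Real.exp (β * (Y x - B x))) (Set.Iio y))
    (hIntY' : ∀ y : ℝ, IntegrableOn (fun x => Real.exp (β * (Y' x - B x))) (Set.Iio y))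
    (hinc : ∀ x y : ℝ, x < y → Y y - Y x ≤ Y' y - Y' x) :
    (∀ x y : ℝ, x < y →
        B y - B x < Dmap β B Y y - Dmap β B Y x ∧
        Dmap β B Y y - Dmap β B Y x ≤ Dmap β B Y' y - Dmap β B Y' x) ∧
    ((∀ x y : ℝ, x < y → Y y - Y x < Y' y - Y' x) →
      ∀ x y : ℝ, x < y →
        Dmap β B Y y - Dmap β B Y x < Dmap β B Y' y - Dmap β B Y' x) := by
  set f : ℝ → ℝ := fun x => Real.exp (β * (Y x - B x)) with hf
  set f' : ℝ → ℝ := fun x => Real.exp (β * (Y' x - B x)) with hf'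
  -- positivity
  have hJ : ∀ t, 0 < Jf β B Y t := Jf_pos β hIntY
  have hJ' : ∀ t, 0 < Jf β B Y' t := Jf_pos β hIntY'
  -- pointwise comparison: for w ≤ z, f' z * f w ≥ ... stated via the ratio constant
  have hpt : ∀ w z : ℝ, w ≤ z →
      Real.exp (β * (Y' w - Y w)) * f z ≤ f' z := by
    intro w z hwz
    have h2 : Y z - Y w ≤ Y' z - Y' w := by
      rcases eq_or_lt_of_le hwz with rfl | h
      · simp
      · exact hinc w z h
    simp only [hf, hf', ← Real.exp_add]
    apply Real.exp_le_exp.2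
    nlinarith
  have hpt' : ∀ w z : ℝ, w < z →
      f' w ≤ Real.exp (β * (Y' z - Y z)) * f w := by
    intro w z h
    simp only [hf, hf', ← Real.exp_add]
    apply Real.exp_le_exp.2
    have := hinc w z h
    nlinarith
  -- core ratio inequality
  have key : ∀ x y : ℝ, x < y →
      Jf β B Y y * Jf β B Y' x ≤ Jf β B Y' y * Jf β B Y x := by
    intro x y hxy
    set c := Real.exp (β * (Y' x - Y x)) with hc
    have hA : (0:ℝ) ≤ ∫ z in Set.Ico x y, f z :=
      setIntegral_nonneg measurableSet_Ico (fun z _ => (Real.exp_pos _).le)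
    have hA' : c * (∫ z in Set.Ico x y, f z) ≤ ∫ z in Set.Ico x y, f' z := by
      rw [← integral_const_mul]
      apply setIntegral_mono_on
        (((hIntY y).mono_set Set.Ico_subset_Iio_self).const_mul c)
        ((hIntY' y).mono_set Set.Ico_subset_Iio_self) measurableSet_Ico
      intro z hz; exact hpt x z hz.1
    have hJx' : Jf β B Y' x ≤ c * Jf β B Y x := by
      rw [Jf, Jf, ← integral_const_mul]
      apply setIntegral_mono_on (hIntY' x) ((hIntY x).const_mul c) measurableSet_Iio
      intro w hw; exact hpt' w x hw
    rw [Jf_split β hIntY hxy, Jf_split β hIntY' hxy]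
    nlinarith [hJ x, hJ' x]
  have keylt : (∀ x y : ℝ, x < y → Y y - Y x < Y' y - Y' x) → ∀ x y : ℝ, x < y →
      Jf β B Y y * Jf β B Y' x < Jf β B Y' y * Jf β B Y x := by
    intro hst x y hxy
    set c := Real.exp (β * (Y' x - Y x)) with hc
    set m := (x + y) / 2 with hm
    have hxm : x < m := by rw [hm]; linarith
    have hmy : m < y := by rw [hm]; linarith
    set cm := Real.exp (β * (Y' m - Y m)) with hcm
    have hccm : c < cm := by
      apply Real.exp_lt_exp.2
      have := hst x m hxm
      nlinarith
    have hA1 : c * (∫ z in Set.Ico x m, f z) ≤ ∫ z in Set.Ico x m, f' z := by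
      rw [← integral_const_mul]
      apply setIntegral_mono_on
        (((hIntY m).mono_set Set.Ico_subset_Iio_self).const_mul c)
        ((hIntY' m).mono_set Set.Ico_subset_Iio_self) measurableSet_Ico
      intro z hz; exact hpt x z hz.1
    have hA2 : cm * (∫ z in Set.Ico m y, f z) ≤ ∫ z in Set.Ico m y, f' z := by
      rw [← integral_const_mul]
      apply setIntegral_mono_on
        (((hIntY y).mono_set Set.Ico_subset_Iio_self).const_mul cm)
        ((hIntY' y).mono_set Set.Ico_subset_Iio_self) measurableSet_Ico
      intro z hz; exact hpt m z hz.1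
    have hA2pos : (0:ℝ) < ∫ z in Set.Ico m y, f z := by
      apply exp_setIntegral_pos β ((hIntY y).mono_set Set.Ico_subset_Iio_self)
        measurableSet_Ico
      rw [Real.volume_Ico]
      simp [hmy]
    have hA1nn : (0:ℝ) ≤ ∫ z in Set.Ico x m, f z :=
      setIntegral_nonneg measurableSet_Ico (fun z _ => (Real.exp_pos _).le)
    have hsplitA : (∫ z in Set.Ico x y, f z)
        = (∫ z in Set.Ico x m, f z) + ∫ z in Set.Ico m y, f z := by
      rw [← Set.Ico_union_Ico_eq_Ico hxm.le hmy.le,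
        setIntegral_union (Set.Ico_disjoint_Ico_same) measurableSet_Ico
          ((hIntY y).mono_set (Set.Ico_subset_Iio_self.trans (Set.Iio_subset_Iio hmy.le)))
          ((hIntY y).mono_set Set.Ico_subset_Iio_self)]
    have hsplitA' : (∫ z in Set.Ico x y, f' z)
        = (∫ z in Set.Ico x m, f' z) + ∫ z in Set.Ico m y, f' z := by
      rw [← Set.Ico_union_Ico_eq_Ico hxm.le hmy.le,
        setIntegral_union (Set.Ico_disjoint_Ico_same) measurableSet_Ico
          ((hIntY' y).mono_set (Set.Ico_subset_Iio_self.trans (Set.Iio_subset_Iio hmy.le)))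
          ((hIntY' y).mono_set Set.Ico_subset_Iio_self)]
    have hAlt : c * (∫ z in Set.Ico x y, f z) < ∫ z in Set.Ico x y, f' z := by
      rw [hsplitA, hsplitA']
      nlinarith
    have hJx' : Jf β B Y' x ≤ c * Jf β B Y x := by
      rw [Jf, Jf, ← integral_const_mul]
      apply setIntegral_mono_on (hIntY' x) ((hIntY x).const_mul c) measurableSet_Iio
      intro w hw; exact hpt' w x hw
    have hAnn : (0:ℝ) ≤ ∫ z in Set.Ico x y, f z :=
      setIntegral_nonneg measurableSet_Ico (fun z _ => (Real.exp_pos _).le)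
    rw [Jf_split β hIntY hxy, Jf_split β hIntY' hxy]
    nlinarith [hJ x, hJ' x]
  -- translate ratio inequalities to Dmap statements
  refine ⟨fun x y hxy => ?_, fun hst x y hxy => ?_⟩
  · constructor
    · rw [Dmap_sub β hβ hIntY]
      have hJlt : Jf β B Y x < Jf β B Y y := by
        rw [Jf_split β hIntY hxy]
        have : (0:ℝ) < ∫ z in Set.Ico x y, f z := by
          apply exp_setIntegral_pos β ((hIntY y).mono_set Set.Ico_subset_Iio_self)
            measurableSet_Ico
          rw [Real.volume_Ico]; simp [hxy]
        linarith
      have := Real.log_lt_log (hJ x) hJlt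
      have hβi : (0:ℝ) < β⁻¹ := inv_pos.2 hβ
      nlinarith
    · rw [Dmap_sub β hβ hIntY, Dmap_sub β hβ hIntY']
      have h1 : Real.log (Jf β B Y y) + Real.log (Jf β B Y' x)
          ≤ Real.log (Jf β B Y' y) + Real.log (Jf β B Y x) := by
        rw [← Real.log_mul (hJ y).ne' (hJ' x).ne', ← Real.log_mul (hJ' y).ne' (hJ x).ne']
        exact Real.log_le_log (mul_pos (hJ y) (hJ' x)) (key x y hxy)
      have hβi : (0:ℝ) < β⁻¹ := inv_pos.2 hβ
      nlinarith
  · rw [Dmap_sub β hβ hIntY, Dmap_sub β hβ hIntY']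
    have h1 : Real.log (Jf β B Y y) + Real.log (Jf β B Y' x)
        < Real.log (Jf β B Y' y) + Real.log (Jf β B Y x) := by
      rw [← Real.log_mul (hJ y).ne' (hJ' x).ne', ← Real.log_mul (hJ' y).ne' (hJ x).ne']
      exact Real.log_lt_log (mul_pos (hJ y) (hJ' x)) (keylt hst x y hxy)
    have hβi : (0:ℝ) < β⁻¹ := inv_pos.2 hβ
    nlinarith
end

section
/- For β, γ > 0, α ∈ ℝ, and functions Y¹, Y² : ℝ → ℝ for which all quantities are finite, define T_{γ,α} f(x) = γ⁻¹ f(γ² x) + α x. Then T_{γ,α} D_β(Y¹, Y²) = D_{βγ}(T_{γ,α} Y¹, T_{γ,α} Y²), i.e., the queueing map D intertwines with the diffusive-scaling-plus-shear transformation, with the inverse temperature rescaled from β to βγ. -/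
open MeasureTheory Real

/-- Diffusive scaling plus shear: `T_{γ,α} f (x) = γ⁻¹ f(γ² x) + α x`. -/
noncomputable def Tscal (γ α : ℝ) (f : ℝ → ℝ) (x : ℝ) : ℝ :=
  γ⁻¹ * f (γ ^ 2 * x) + α * x

private lemma integral_comp_mul_left_Iio' (g : ℝ → ℝ) (a : ℝ) {b : ℝ} (hb : 0 < b) :
    (∫ x in Set.Iio a, g (b * x)) = b⁻¹ • ∫ x in Set.Iio (b * a), g x := by
  have h1 : MeasurableSet (Set.Iio a) := measurableSet_Iio
  have h2 : MeasurableSet (Set.Iio (b * a)) := measurableSet_Iio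
  rw [← integral_indicator h1, ← integral_indicator h2,
    ← abs_of_pos (inv_pos.mpr hb), ← Measure.integral_comp_mul_left]
  congr 1
  ext1 x
  erw [← Set.indicator_comp_right, Set.preimage_const_mul_Iio₀ _ hb,
    mul_div_cancel_left₀ _ hb.ne']
  rfl

private lemma integrableOn_Iio_comp_mul_left' (f : ℝ → ℝ) (c : ℝ) {a : ℝ} (ha : 0 < a)
    (hf : IntegrableOn f (Set.Iio (a * c))) :
    IntegrableOn (fun x => f (a * x)) (Set.Iio c) := by
  rw [← integrable_indicator_iff (measurableSet_Iio : MeasurableSet <| Set.Iio c)]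
  rw [← integrable_indicator_iff
    (measurableSet_Iio : MeasurableSet <| Set.Iio (a * c))] at hf
  have := hf.comp_mul_left' ha.ne'
  convert this using 1
  · rfl
  · rfl
  ext1 x
  erw [← Set.indicator_comp_right, Set.preimage_const_mul_Iio₀ _ ha,
    mul_div_cancel_left₀ _ ha.ne']
  rfl

private lemma Ipos {β : ℝ} (hβ : 0 < β) {Y₁ Y₂ : ℝ → ℝ} (y : ℝ)
    (hInt : IntegrableOn (fun x => Real.exp (β * (Y₂ x - Y₁ x))) (Set.Iio y)) :
    0 < ∫ x in Set.Iio y, Real.exp (β * (Y₂ x - Y₁ x)) := by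
  rw [setIntegral_pos_iff_support_of_nonneg_ae
    (Filter.Eventually.of_forall fun x => (Real.exp_pos _).le) hInt]
  have : Function.support (fun x => Real.exp (β * (Y₂ x - Y₁ x))) = Set.univ := by
    ext x; simp [Function.support, (Real.exp_pos _).ne']
  rw [this, Set.univ_inter]
  simp [Real.volume_Iio]

private lemma Dmap_eq {β : ℝ} (hβ : 0 < β) {Y₁ Y₂ : ℝ → ℝ}
    (hY₁0 : Y₁ 0 = 0) (hY₂0 : Y₂ 0 = 0)
    (hInt : ∀ y : ℝ, IntegrableOn (fun x => Real.exp (β * (Y₂ x - Y₁ x))) (Set.Iio y))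
    (y : ℝ) :
    Dmap β Y₁ Y₂ y = Y₁ y + β⁻¹ *
      (Real.log (∫ x in Set.Iio y, Real.exp (β * (Y₂ x - Y₁ x)))
        - Real.log (∫ x in Set.Iio 0, Real.exp (β * (Y₂ x - Y₁ x)))) := by
  have key : ∀ z : ℝ, Qmap β Y₁ Y₂ z = (Y₁ z - Y₂ z) +
      β⁻¹ * Real.log (∫ x in Set.Iio z, Real.exp (β * (Y₂ x - Y₁ x))) := by
    intro z
    unfold Qmap
    have : (∫ x in Set.Iio z, Real.exp (β * ((Y₁ z - Y₁ x) - (Y₂ z - Y₂ x))))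
        = Real.exp (β * (Y₁ z - Y₂ z)) * ∫ x in Set.Iio z, Real.exp (β * (Y₂ x - Y₁ x)) := by
      rw [← integral_const_mul]
      apply setIntegral_congr_fun measurableSet_Iio
      intro x _
      dsimp only
      rw [← Real.exp_add]
      congr 1
      ring
    rw [this, Real.log_mul (Real.exp_pos _).ne' (Ipos hβ z (hInt z)).ne',
      Real.log_exp, mul_add, inv_mul_cancel_left₀ hβ.ne']
  unfold Dmap
  rw [key y, key 0, hY₁0, hY₂0]
  ring

theorem stmt3 (β γ α : ℝ) (hβ : 0 < β) (hγ : 0 < γ) (Y₁ Y₂ : ℝ → ℝ)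
    (hY₁0 : Y₁ 0 = 0) (hY₂0 : Y₂ 0 = 0)
    (hInt : ∀ y : ℝ, IntegrableOn (fun x => Real.exp (β * (Y₂ x - Y₁ x))) (Set.Iio y)) :
    Tscal γ α (Dmap β Y₁ Y₂) = Dmap (β * γ) (Tscal γ α Y₁) (Tscal γ α Y₂) := by
  have hγ2 : (0:ℝ) < γ ^ 2 := by positivity
  -- properties of the scaled functions
  have hTeq : ∀ x : ℝ, β * γ * (Tscal γ α Y₂ x - Tscal γ α Y₁ x)
      = β * (Y₂ (γ ^ 2 * x) - Y₁ (γ ^ 2 * x)) := by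
    intro x
    unfold Tscal
    field_simp
    ring
  have hIntT : ∀ y : ℝ, IntegrableOn
      (fun x => Real.exp (β * γ * (Tscal γ α Y₂ x - Tscal γ α Y₁ x))) (Set.Iio y) := by
    intro y
    have := integrableOn_Iio_comp_mul_left'
      (fun x => Real.exp (β * (Y₂ x - Y₁ x))) y hγ2 (hInt (γ ^ 2 * y))
    apply this.congr_fun _ measurableSet_Iio
    intro x _
    dsimp only
    rw [hTeq]
  have hT₁0 : Tscal γ α Y₁ 0 = 0 := by simp [Tscal, hY₁0]
  have hT₂0 : Tscal γ α Y₂ 0 = 0 := by simp [Tscal, hY₂0]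
  -- the scaled integral
  have hJ : ∀ y : ℝ, (∫ x in Set.Iio y,
      Real.exp (β * γ * (Tscal γ α Y₂ x - Tscal γ α Y₁ x)))
      = (γ ^ 2)⁻¹ * ∫ x in Set.Iio (γ ^ 2 * y), Real.exp (β * (Y₂ x - Y₁ x)) := by
    intro y
    have h1 : (∫ x in Set.Iio y, Real.exp (β * γ * (Tscal γ α Y₂ x - Tscal γ α Y₁ x)))
        = ∫ x in Set.Iio y, Real.exp (β * (Y₂ (γ ^ 2 * x) - Y₁ (γ ^ 2 * x))) := by
      apply setIntegral_congr_fun measurableSet_Iio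
      intro x _
      dsimp only
      rw [hTeq]
    rw [h1, integral_comp_mul_left_Iio' (fun x => Real.exp (β * (Y₂ x - Y₁ x))) y hγ2,
      smul_eq_mul]
  funext y
  have hβγ : 0 < β * γ := mul_pos hβ hγ
  rw [show Tscal γ α (Dmap β Y₁ Y₂) y = γ⁻¹ * Dmap β Y₁ Y₂ (γ ^ 2 * y) + α * y from rfl,
    Dmap_eq hβ hY₁0 hY₂0 hInt (γ ^ 2 * y),
    Dmap_eq hβγ hT₁0 hT₂0 hIntT y, hJ y, hJ 0, mul_zero,
    show Tscal γ α Y₁ y = γ⁻¹ * Y₁ (γ ^ 2 * y) + α * y from rfl]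
  have hI : ∀ z : ℝ, 0 < ∫ x in Set.Iio z, Real.exp (β * (Y₂ x - Y₁ x)) :=
    fun z => Ipos hβ z (hInt z)
  rw [Real.log_mul (by positivity) (hI (γ ^ 2 * y)).ne',
    Real.log_mul (by positivity) (hI 0).ne']
  have : (β * γ)⁻¹ = β⁻¹ * γ⁻¹ := by rw [mul_inv]
  ring
end

section
/- Fix n ≥ 2 and β > 0. Let Y¹,…,Yⁿ : ℝ → ℝ be functions (vanishing at 0) for which all the relevant integrals are finite. Then the iterated queueing map satisfies: exp(β D_β^{(n)}(Y¹,…,Yⁿ)(y)) = e^{β Y¹(y)} · [∫_{−∞ < x_{n−1} < ⋯ < x₁ < y} ∏_{i=1}^{n−1} e^{β(Y^{i+1}(x_i) − Y^i(x_i))} dx] / [∫_{−∞ < x_{n−1} < ⋯ < x₁ < 0} ∏_{i=1}^{n−1} e^{β(Y^{i+1}(x_i) − Y^i(x_i))} dx]. -/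
open MeasureTheory Real

/-- Iterated queueing map: `Dn β k (Y⁰,…,Yᵏ) = D_β^{(k+1)}(Y⁰,…,Yᵏ)`. -/
noncomputable def Dn (β : ℝ) : (k : ℕ) → (Fin (k + 1) → ℝ → ℝ) → ℝ → ℝ
  | 0, Y => Y 0
  | k + 1, Y => Dmap β (Y 0) (Dn β k (fun i => Y i.succ))

/-- The backward simplex `{x : −∞ < x_{k-1} < ⋯ < x₀ < y}` in `ℝᵏ`. -/
def simplexBelow (k : ℕ) (y : ℝ) : Set (Fin k → ℝ) :=
  {x | StrictAnti x ∧ ∀ i, x i < y}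

noncomputable def prodFun (β : ℝ) (W : ℕ → ℝ → ℝ) (j n : ℕ) : (Fin n → ℝ) → ℝ :=
  fun x => ∏ i : Fin n, Real.exp (β * (W (j + i.1 + 1) (x i) - W (j + i.1) (x i)))

noncomputable def SInt (β : ℝ) (W : ℕ → ℝ → ℝ) (j n : ℕ) (y : ℝ) : ℝ :=
  ∫ x in simplexBelow n y, prodFun β W j n x

lemma prodFun_pos (β : ℝ) (W : ℕ → ℝ → ℝ) (j n : ℕ) (x : Fin n → ℝ) :
    0 < prodFun β W j n x :=
  Finset.prod_pos fun _ _ => Real.exp_pos _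

lemma isOpen_simplexBelow (n : ℕ) (y : ℝ) : IsOpen (simplexBelow n y) := by
  have h1 : simplexBelow n y =
      (⋂ (i : Fin n) (j : Fin n) (_ : i < j), {x : Fin n → ℝ | x j < x i}) ∩
        ⋂ i : Fin n, {x : Fin n → ℝ | x i < y} := by
    ext x
    simp only [simplexBelow, Set.mem_inter_iff, Set.mem_iInter, Set.mem_setOf_eq]
    exact ⟨fun ⟨h, h2⟩ => ⟨fun i j hij => h hij, h2⟩,
      fun ⟨h, h2⟩ => ⟨fun i j hij => h i j hij, h2⟩⟩
  rw [h1]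
  refine IsOpen.inter ?_
    (isOpen_iInter_of_finite fun i => isOpen_lt (continuous_apply i) continuous_const)
  exact isOpen_iInter_of_finite fun i => isOpen_iInter_of_finite fun j =>
    isOpen_iInter_of_finite fun _ => isOpen_lt (continuous_apply j) (continuous_apply i)

lemma nonempty_simplexBelow (n : ℕ) (y : ℝ) : (simplexBelow n y).Nonempty := by
  refine ⟨fun i => y - 1 - i.1, fun a b hab => ?_, fun i => ?_⟩
  · have h : (a.1 : ℝ) < b.1 := by exact_mod_cast hab
    show y - 1 - (b.1 : ℝ) < y - 1 - (a.1 : ℝ)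
    linarith
  · have h : (0 : ℝ) ≤ i.1 := Nat.cast_nonneg _
    show y - 1 - (i.1 : ℝ) < y
    linarith

lemma setIntegral_simplex_pos {n : ℕ} {y : ℝ} {f : (Fin n → ℝ) → ℝ}
    (hf : ∀ x, 0 < f x) (hI : IntegrableOn f (simplexBelow n y)) :
    0 < ∫ x in simplexBelow n y, f x := by
  refine (integral_pos_iff_support_of_nonneg (fun x => (hf x).le) hI).2 ?_
  have hs : Function.support f = Set.univ := Set.eq_univ_of_forall fun x => (hf x).ne'
  rw [hs, Measure.restrict_apply_univ]
  exact (isOpen_simplexBelow n y).measure_pos _ (nonempty_simplexBelow n y)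

lemma prodFun_shift (β : ℝ) (W : ℕ → ℝ → ℝ) (j n : ℕ) :
    prodFun β (fun m => W (m + 1)) j n = prodFun β W (j + 1) n := by
  funext x
  refine Finset.prod_congr rfl fun i _ => by
    show Real.exp (β * (W (j + i.1 + 1 + 1) (x i) - W (j + i.1 + 1) (x i))) = _
    rw [show j + i.1 + 1 + 1 = j + 1 + i.1 + 1 from by omega,
      show j + i.1 + 1 = j + 1 + i.1 from by omega]

lemma SInt_shift (β : ℝ) (W : ℕ → ℝ → ℝ) (j n : ℕ) (y : ℝ) :
    SInt β (fun m => W (m + 1)) j n y = SInt β W (j + 1) n y := by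
  unfold SInt; rw [prodFun_shift]

lemma simplexBelow_zero (y : ℝ) : simplexBelow 0 y = Set.univ :=
  Set.eq_univ_of_forall fun x => ⟨fun a _ _ => a.elim0, fun i => i.elim0⟩

lemma SInt_zero_dim (β : ℝ) (W : ℕ → ℝ → ℝ) (j : ℕ) (y : ℝ) : SInt β W j 0 y = 1 := by
  have h : prodFun β W j 0 = fun _ => (1 : ℝ) := by
    funext x; simp [prodFun]
  rw [SInt, h, simplexBelow_zero, Measure.restrict_univ, integral_const]
  have hv : (volume : Measure (Fin 0 → ℝ)) Set.univ = 1 := by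
    rw [volume_pi, Measure.pi_univ]; simp
  simp [Measure.real, hv]

lemma fubini_simplex (β : ℝ) (W : ℕ → ℝ → ℝ) (j n : ℕ) (y : ℝ)
    (hI : IntegrableOn (prodFun β W j (n + 1)) (simplexBelow (n + 1) y)) :
    SInt β W j (n + 1) y
      = ∫ t in Set.Iio y, Real.exp (β * (W (j + 1) t - W j t)) * SInt β W (j + 1) n t := by
  classical
  set e := MeasurableEquiv.piFinSuccAbove (fun _ : Fin (n + 1) => ℝ) 0 with he
  have hMP : MeasurePreserving e volume volume :=
    volume_preserving_piFinSuccAbove (fun _ : Fin (n + 1) => ℝ) 0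
  set g : ℝ × (Fin n → ℝ) → ℝ :=
    fun p => Real.exp (β * (W (j + 1) p.1 - W j p.1)) * prodFun β W (j + 1) n p.2 with hg
  set T : Set (ℝ × (Fin n → ℝ)) := {p | p.1 < y ∧ p.2 ∈ simplexBelow n p.1} with hT
  have hTopen : IsOpen T := by
    have h1 : T = ({p : ℝ × (Fin n → ℝ) | p.1 < y} ∩
        ((⋂ (a : Fin n) (b : Fin n) (_ : a < b), {p : ℝ × (Fin n → ℝ) | p.2 b < p.2 a}) ∩
          ⋂ a : Fin n, {p : ℝ × (Fin n → ℝ) | p.2 a < p.1})) := by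
      ext p
      simp only [hT, Set.mem_setOf_eq, Set.mem_inter_iff, Set.mem_iInter, simplexBelow]
      exact ⟨fun ⟨h1, h2, h3⟩ => ⟨h1, fun a b hab => h2 hab, h3⟩,
        fun ⟨h1, h2, h3⟩ => ⟨h1, fun a b hab => h2 a b hab, h3⟩⟩
    rw [h1]
    refine (isOpen_lt continuous_fst continuous_const).inter (IsOpen.inter ?_ ?_)
    · exact isOpen_iInter_of_finite fun a => isOpen_iInter_of_finite fun b =>
        isOpen_iInter_of_finite fun _ =>
          isOpen_lt ((continuous_apply b).comp continuous_snd)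
            ((continuous_apply a).comp continuous_snd)
    · exact isOpen_iInter_of_finite fun a =>
        isOpen_lt ((continuous_apply a).comp continuous_snd) continuous_fst
  have hex : ∀ x : Fin (n + 1) → ℝ, e x = (x 0, fun i : Fin n => x i.succ) := by
    intro x
    rw [show e x = (x 0, fun i => x ((0 : Fin (n + 1)).succAbove i)) from rfl]
    simp [Fin.zero_succAbove]
  have hpre : e ⁻¹' T = simplexBelow (n + 1) y := by
    ext x
    rw [Set.mem_preimage, hex x]
    constructor
    · rintro ⟨h1, h2, h3⟩
      refine ⟨fun a b hab => ?_, fun i => ?_⟩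
      · induction b using Fin.cases with
        | zero => exact absurd hab (by simp)
        | succ b =>
          induction a using Fin.cases with
          | zero => exact h3 b
          | succ a => exact h2 (by rwa [Fin.succ_lt_succ_iff] at hab)
      · induction i using Fin.cases with
        | zero => exact h1
        | succ i => exact (h3 i).trans h1
    · rintro ⟨h1, h2⟩
      exact ⟨h2 0, fun a b hab => h1 (Fin.succ_lt_succ_iff.2 hab), fun i => h1 i.succ_pos⟩
  have hbody : ∀ x : Fin (n + 1) → ℝ, prodFun β W j (n + 1) x = g (e x) := by
    intro x
    rw [hex x, hg]
    show (∏ i : Fin (n + 1), Real.exp (β * (W (j + i.1 + 1) (x i) - W (j + i.1) (x i)))) = _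
    rw [Fin.prod_univ_succ]
    dsimp only
    congr 1
    refine Finset.prod_congr rfl fun i _ => ?_
    simp only [Fin.val_succ]
    rw [show j + (i.1 + 1) + 1 = j + 1 + i.1 + 1 from by omega,
      show j + (i.1 + 1) = j + 1 + i.1 from by omega]
  have hIT : IntegrableOn g T := by
    have h1 : IntegrableOn (g ∘ e) (e ⁻¹' T) := by
      rw [hpre, show (g ∘ e) = prodFun β W j (n + 1) from funext fun x => (hbody x).symm]
      exact hI
    exact (hMP.integrableOn_comp_preimage e.measurableEmbedding).1 h1
  have step1 : SInt β W j (n + 1) y = ∫ p in T, g p := by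
    rw [SInt, ← hpre]
    rw [show (fun x => prodFun β W j (n + 1) x) = fun x => g (e x) from funext hbody]
    exact hMP.setIntegral_preimage_emb e.measurableEmbedding g T
  have step2 : (∫ p in T, g p) = ∫ p, T.indicator g p :=
    (integral_indicator hTopen.measurableSet).symm
  have hIndInt : Integrable (T.indicator g) :=
    (integrable_indicator_iff hTopen.measurableSet).2 hIT
  have step3 : (∫ p, T.indicator g p) = ∫ t, ∫ xs, T.indicator g (t, xs) := by
    exact integral_prod _ hIndInt
  have step4 : ∀ t : ℝ, (∫ xs, T.indicator g (t, xs))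
      = (Set.Iio y).indicator
          (fun t => Real.exp (β * (W (j + 1) t - W j t)) * SInt β W (j + 1) n t) t := by
    intro t
    by_cases ht : t < y
    · rw [Set.indicator_of_mem (show t ∈ Set.Iio y from ht)]
      have h2 : (fun xs => T.indicator g (t, xs))
          = (simplexBelow n t).indicator (fun xs => g (t, xs)) := by
        funext xs
        by_cases hx : xs ∈ simplexBelow n t
        · rw [Set.indicator_of_mem hx, Set.indicator_of_mem (show (t, xs) ∈ T from ⟨ht, hx⟩)]
        · rw [Set.indicator_of_notMem hx,
            Set.indicator_of_notMem (show (t, xs) ∉ T from fun hc => hx hc.2)]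
      rw [h2, integral_indicator (isOpen_simplexBelow n t).measurableSet]
      show (∫ xs in simplexBelow n t,
          Real.exp (β * (W (j + 1) t - W j t)) * prodFun β W (j + 1) n xs) = _
      rw [MeasureTheory.integral_const_mul]
      rfl
    · rw [Set.indicator_of_notMem (show t ∉ Set.Iio y from ht)]
      have h2 : (fun xs => T.indicator g (t, xs)) = fun _ => (0 : ℝ) := by
        funext xs; exact Set.indicator_of_notMem (fun hc => ht hc.1) _
      rw [h2, integral_zero]
  rw [step1, step2, step3]
  rw [show (fun t => ∫ xs, T.indicator g (t, xs))
      = (Set.Iio y).indicator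
          (fun t => Real.exp (β * (W (j + 1) t - W j t)) * SInt β W (j + 1) n t)
    from funext step4]
  exact integral_indicator measurableSet_Iio

lemma aux_main (β : ℝ) (hβ : 0 < β) (k : ℕ) :
    ∀ (W : ℕ → ℝ → ℝ), (∀ i, W i 0 = 0) →
      (∀ m, m ≤ k → ∀ y : ℝ, IntegrableOn (prodFun β W (k - m) m) (simplexBelow m y)) →
      ∀ y : ℝ, Real.exp (β * Dn β k (fun i => W i.1) y)
        = Real.exp (β * W 0 y) * (SInt β W 0 k y / SInt β W 0 k 0) := by
  induction k with
  | zero =>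
    intro W hW0 _ y
    rw [SInt_zero_dim, SInt_zero_dim]
    show Real.exp (β * W ((0 : Fin 1) : ℕ) y) = _
    norm_num
  | succ k IH =>
    intro W hW0 hInt y
    -- integrability facts
    have hIntk : ∀ t : ℝ, IntegrableOn (prodFun β W 1 k) (simplexBelow k t) := by
      intro t
      have h := hInt k (by omega) t
      rwa [show k + 1 - k = 1 from by omega] at h
    have hIntk1 : ∀ t : ℝ, IntegrableOn (prodFun β W 0 (k + 1)) (simplexBelow (k + 1) t) := by
      intro t
      have h := hInt (k + 1) le_rfl t
      rwa [show k + 1 - (k + 1) = 0 from by omega] at h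
    have hSpos : ∀ t : ℝ, 0 < SInt β W 1 k t := fun t =>
      setIntegral_simplex_pos (prodFun_pos β W 1 k) (hIntk t)
    have hFpos : ∀ t : ℝ, 0 < SInt β W 0 (k + 1) t := fun t =>
      setIntegral_simplex_pos (prodFun_pos β W 0 (k + 1)) (hIntk1 t)
    have hFub : ∀ t : ℝ, SInt β W 0 (k + 1) t
        = ∫ x in Set.Iio t, Real.exp (β * (W 1 x - W 0 x)) * SInt β W 1 k x :=
      fun t => fubini_simplex β W 0 k t (hIntk1 t)
    -- the inductive hypothesis applied to the shifted family
    have hInt' : ∀ m, m ≤ k → ∀ t : ℝ,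
        IntegrableOn (prodFun β (fun n => W (n + 1)) (k - m) m) (simplexBelow m t) := by
      intro m hm t
      have h := hInt m (by omega) t
      rwa [show k + 1 - m = k - m + 1 from by omega, ← prodFun_shift] at h
    have hZ' := IH (fun n => W (n + 1)) (fun i => hW0 (i + 1)) hInt'
    set Z : ℝ → ℝ := Dn β k (fun i : Fin (k + 1) => W (i.1 + 1)) with hZdef
    have hZ : ∀ t : ℝ, Real.exp (β * Z t)
        = Real.exp (β * W 1 t) * (SInt β W 1 k t / SInt β W 1 k 0) := by
      intro t
      have h := hZ' t
      rwa [SInt_shift, SInt_shift] at h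
    -- evaluate the queueing integral
    have hQ : ∀ t : ℝ, Real.exp (β * Qmap β (W 0) Z t)
        = Real.exp (β * W 0 t) * (Real.exp (β * Z t))⁻¹ * (SInt β W 1 k 0)⁻¹
            * SInt β W 0 (k + 1) t := by
      intro t
      have hintegrand : ∀ x : ℝ, Real.exp (β * ((W 0 t - W 0 x) - (Z t - Z x)))
          = (Real.exp (β * W 0 t) * (Real.exp (β * Z t))⁻¹ * (SInt β W 1 k 0)⁻¹)
              * (Real.exp (β * (W 1 x - W 0 x)) * SInt β W 1 k x) := by
        intro x
        rw [show β * ((W 0 t - W 0 x) - (Z t - Z x))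
            = (β * W 0 t + β * Z x) - (β * W 0 x + β * Z t) from by ring,
          Real.exp_sub, Real.exp_add, Real.exp_add, hZ x,
          show β * (W 1 x - W 0 x) = β * W 1 x - β * W 0 x from by ring, Real.exp_sub]
        have h0 : SInt β W 1 k 0 ≠ 0 := (hSpos 0).ne'
        field_simp
        try exact Or.inl trivial
      have hIval : (∫ x in Set.Iio t, Real.exp (β * ((W 0 t - W 0 x) - (Z t - Z x))))
          = (Real.exp (β * W 0 t) * (Real.exp (β * Z t))⁻¹ * (SInt β W 1 k 0)⁻¹)
              * SInt β W 0 (k + 1) t := by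
        simp only [hintegrand]
        rw [MeasureTheory.integral_const_mul, ← hFub t]
      have hc : 0 < Real.exp (β * W 0 t) * (Real.exp (β * Z t))⁻¹ * (SInt β W 1 k 0)⁻¹ :=
        mul_pos (mul_pos (Real.exp_pos _) (inv_pos.2 (Real.exp_pos _)))
          (inv_pos.2 (hSpos 0))
      rw [Qmap, hIval, ← mul_assoc, mul_inv_cancel₀ hβ.ne', one_mul,
        Real.exp_log (mul_pos hc (hFpos t))]
    -- assemble
    have hDn : Dn β (k + 1) (fun i : Fin (k + 2) => W i.1) = Dmap β (W 0) Z := rfl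
    rw [hDn, Dmap,
      show β * (Z y + Qmap β (W 0) Z y - Qmap β (W 0) Z 0)
        = β * Z y + β * Qmap β (W 0) Z y - β * Qmap β (W 0) Z 0 from by ring,
      Real.exp_sub, Real.exp_add, hQ y, hQ 0]
    have h1 : Real.exp (β * W 0 0) = 1 := by rw [hW0 0, mul_zero, Real.exp_zero]
    have h2 : Real.exp (β * Z 0) = 1 := by
      rw [hZ 0, hW0 1, mul_zero, Real.exp_zero, div_self (hSpos 0).ne', one_mul]
    rw [h1, h2]
    have e1 : Real.exp (β * Z y) ≠ 0 := (Real.exp_pos _).ne'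
    have e2 : SInt β W 1 k 0 ≠ 0 := (hSpos 0).ne'
    have e3 : SInt β W 0 (k + 1) 0 ≠ 0 := (hFpos 0).ne'
    field_simp

theorem stmt5 (β : ℝ) (hβ : 0 < β) (k : ℕ) (hk : 1 ≤ k)
    (Y : Fin (k + 1) → ℝ → ℝ) (hY0 : ∀ i, Y i 0 = 0)
    -- all relevant (suffix) simplex integrals are finite:
    (hInt : ∀ (j : ℕ) (hj : j ≤ k) (y : ℝ),
      IntegrableOn
        (fun x : Fin (k - j) → ℝ =>
          ∏ i : Fin (k - j),
            Real.exp (β * (Y ⟨j + i.1 + 1, by have := i.2; omega⟩ (x i) -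
              Y ⟨j + i.1, by have := i.2; omega⟩ (x i))))
        (simplexBelow (k - j) y)) :
    ∀ y : ℝ,
      Real.exp (β * Dn β k Y y) =
        Real.exp (β * Y 0 y) *
          ((∫ x in simplexBelow k y,
              ∏ i : Fin k, Real.exp (β * (Y i.succ (x i) - Y i.castSucc (x i)))) /
            (∫ x in simplexBelow k (0 : ℝ),
              ∏ i : Fin k, Real.exp (β * (Y i.succ (x i) - Y i.castSucc (x i))))) := by
  intro y
  set W : ℕ → ℝ → ℝ := fun n => if h : n < k + 1 then Y ⟨n, h⟩ else 0 with hWdef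
  have Wlt : ∀ (n : ℕ) (h : n < k + 1), W n = Y ⟨n, h⟩ := fun n h => by
    rw [hWdef]; exact dif_pos h
  have hW0 : ∀ i, W i 0 = 0 := by
    intro i
    rw [hWdef]
    dsimp only
    split
    · exact hY0 _
    · rfl
  have hIntW : ∀ m, m ≤ k → ∀ t : ℝ,
      IntegrableOn (prodFun β W (k - m) m) (simplexBelow m t) := by
    intro m hm t
    have h := hInt (k - m) (Nat.sub_le k m) t
    have he : (fun x : Fin (k - (k - m)) → ℝ =>
        ∏ i : Fin (k - (k - m)),
          Real.exp (β * (Y ⟨k - m + i.1 + 1, by have := i.2; omega⟩ (x i) -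
            Y ⟨k - m + i.1, by have := i.2; omega⟩ (x i))))
        = prodFun β W (k - m) (k - (k - m)) := by
      funext x
      unfold prodFun
      refine Finset.prod_congr rfl fun i _ => ?_
      rw [Wlt (k - m + i.1 + 1) (by have := i.2; omega),
        Wlt (k - m + i.1) (by have := i.2; omega)]
    rw [he] at h
    rwa [Nat.sub_sub_self hm] at h
  have hYfun : (fun i : Fin (k + 1) => W i.1) = Y := funext fun i => Wlt i.1 i.2
  have hW0y : W 0 = Y 0 := Wlt 0 k.succ_pos
  have hfe : prodFun β W 0 k = fun x : Fin k → ℝ =>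
      ∏ i : Fin k, Real.exp (β * (Y i.succ (x i) - Y i.castSucc (x i))) := by
    funext x
    unfold prodFun
    refine Finset.prod_congr rfl fun i _ => ?_
    rw [show 0 + i.1 + 1 = i.1 + 1 from by omega, show 0 + i.1 = i.1 from by omega,
      Wlt (i.1 + 1) (by have := i.2; omega), Wlt i.1 (by have := i.2; omega)]
    rfl
  have hSI : ∀ t : ℝ, SInt β W 0 k t = ∫ x in simplexBelow k t,
      ∏ i : Fin k, Real.exp (β * (Y i.succ (x i) - Y i.castSucc (x i))) := by
    intro t
    unfold SInt
    simp only [hfe]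
  have H := aux_main β hβ k W hW0 hIntW y
  rw [hYfun, hW0y, hSI y, hSI 0] at H
  exact H
end

section
/- There exists a universal constant C > 0 such that for all integers k > 0, n ≥ m ≥ 0, all reals y > x, and all families m = n₀ ≤ n₁ ≤ ⋯ ≤ n_k ≤ n_{k+1} = n of integers and x = y₀ < y₁ < ⋯ < y_k < y_{k+1} = y of reals: ∏_{i=0}^k q²(n_{i+1}−n_i, y_{i+1}−y_i) ≤ C^k · (e^{−2(y−x)} 2^{2(n−m)} / π^{(k+1)/2}) · ∏_{i=0}^k (y_{i+1}−y_i)^{2(n_{i+1}−n_i)} / ([2(n_{i+1}−n_i)]! · √((n_{i+1}−n_i) ∨ 1)), where q(n,y) = e^{−y} yⁿ/n! for n ≥ 0, y ≥ 0. -/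
open Real

/-- The Poisson kernel `q(n,y) = e^{−y} yⁿ/n!` for `y ≥ 0` (and `0` for `y < 0`). -/
noncomputable def poisKer (n : ℕ) (y : ℝ) : ℝ :=
  if 0 ≤ y then Real.exp (-y) * y ^ n / (Nat.factorial n) else 0


lemma cb_sq (d : ℕ) : (Nat.centralBinom d)^2 * (3*d+1) ≤ 3 * 16^d := by
  induction d with
  | zero => simp [Nat.centralBinom]
  | succ d ih =>
    have h := Nat.succ_mul_centralBinom_succ d
    have h2 : (d+1)^2 * (Nat.centralBinom (d+1))^2 = 4*(2*d+1)^2 * (Nat.centralBinom d)^2 := by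
      have := congrArg (· ^ 2) h
      simp only [mul_pow] at this
      linarith [this]
    have poly : (3*d+4) * 4 * (2*d+1)^2 * 3 ≤ 48 * ((d+1)^2*(3*d+1)) := by nlinarith
    have key : (Nat.centralBinom (d+1))^2 * (3*(d+1)+1) * ((d+1)^2*(3*d+1)) ≤
        3*16^(d+1) * ((d+1)^2*(3*d+1)) := by
      calc (Nat.centralBinom (d+1))^2 * (3*(d+1)+1) * ((d+1)^2*(3*d+1))
          = (3*d+4) * 4 * (2*d+1)^2 * ((Nat.centralBinom d)^2 * (3*d+1)) := by
            rw [show (Nat.centralBinom (d+1))^2 * (3*(d+1)+1) * ((d+1)^2*(3*d+1)) =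
              ((d+1)^2 * (Nat.centralBinom (d+1))^2) * ((3*(d+1)+1) * (3*d+1)) by ring, h2]
            ring
        _ ≤ (3*d+4) * 4 * (2*d+1)^2 * (3 * 16^d) := Nat.mul_le_mul_left _ ih
        _ ≤ 48 * ((d+1)^2*(3*d+1)) * 16^d := by
            rw [show (3*d+4) * 4 * (2*d+1)^2 * (3 * 16^d) = ((3*d+4) * 4 * (2*d+1)^2 * 3) * 16^d by ring]
            exact Nat.mul_le_mul_right _ poly
        _ = 3*16^(d+1) * ((d+1)^2*(3*d+1)) := by ring
    exact Nat.le_of_mul_le_mul_right key (by positivity)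

lemma cb_sqrt (d : ℕ) : (Nat.centralBinom d : ℝ) * Real.sqrt d ≤ 4 ^ d := by
  have h : ((Nat.centralBinom d : ℝ) * Real.sqrt d) ^ 2 ≤ (4 ^ d : ℝ) ^ 2 := by
    have hc : ((Nat.centralBinom d : ℝ))^2 * d * 3 ≤ 3 * 16 ^ d := by
      have := cb_sq d
      have := (Nat.cast_le (α := ℝ)).2 this
      push_cast at this
      nlinarith [sq_nonneg ((Nat.centralBinom d : ℝ))]
    rw [mul_pow, Real.sq_sqrt (by positivity : (0:ℝ) ≤ (d:ℝ))]
    calc ((Nat.centralBinom d : ℝ))^2 * d ≤ 16 ^ d := by linarith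
      _ = (4 ^ d : ℝ) ^ 2 := by rw [← pow_mul, show (16:ℝ) = 4^2 by norm_num, ← pow_mul, mul_comm]
  have h1 : (0:ℝ) ≤ (Nat.centralBinom d : ℝ) * Real.sqrt d := by positivity
  exact (pow_le_pow_iff_left₀ h1 (by positivity) (by norm_num)).1 h

lemma sqrt_pi_le_two : Real.sqrt π ≤ 2 := by
  rw [show (2:ℝ) = Real.sqrt 4 by rw [show (4:ℝ) = 2^2 by norm_num, Real.sqrt_sq]; norm_num]
  exact Real.sqrt_le_sqrt (by linarith [Real.pi_le_four])

lemma key_fac (d : ℕ) : (((d.factorial : ℝ))⁻¹)^2 ≤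
    2/Real.sqrt π * (2^(2*d) / (((2*d).factorial : ℝ) * Real.sqrt (max (d:ℝ) 1))) := by
  set s := Real.sqrt (max (d:ℝ) 1) with hs
  have hspos : 0 < s := Real.sqrt_pos.2 (by positivity)
  have hpi : (0:ℝ) < Real.sqrt π := Real.sqrt_pos.2 Real.pi_pos
  have h1le : (1:ℝ) ≤ 2/Real.sqrt π := by
    rw [le_div_iff₀ hpi]; linarith [sqrt_pi_le_two]
  have hcb : (Nat.centralBinom d : ℝ) * s ≤ (2/Real.sqrt π) * 4^d := by
    rcases Nat.eq_zero_or_pos d with h0 | hd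
    · subst h0
      have : s = 1 := by rw [hs]; norm_num
      simp [this, Nat.centralBinom]
      simpa using h1le
    · have hmax : max (d:ℝ) 1 = (d:ℝ) := max_eq_left (by exact_mod_cast hd)
      rw [hs, hmax]
      calc (Nat.centralBinom d : ℝ) * Real.sqrt d ≤ 4^d := cb_sqrt d
        _ ≤ (2/Real.sqrt π) * 4^d := le_mul_of_one_le_left (by positivity) h1le
  have hfac : (((2*d).factorial : ℝ)) = (Nat.centralBinom d : ℝ) * ((d.factorial : ℝ))^2 := by
    have := Nat.choose_mul_factorial_mul_factorial (show d ≤ 2*d by omega)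
    rw [Nat.centralBinom_eq_two_mul_choose]
    have h2 : 2*d - d = d := by omega
    rw [h2] at this
    push_cast [← this]
    ring
  have hcbpos : (0:ℝ) < (Nat.centralBinom d : ℝ) := by exact_mod_cast Nat.centralBinom_pos d
  have hdf : (0:ℝ) < (d.factorial : ℝ) := by exact_mod_cast d.factorial_pos
  have h2 : (2:ℝ)^(2*d) = 4^d := by rw [pow_mul]; norm_num
  calc (((d.factorial : ℝ))⁻¹)^2
      = ((Nat.centralBinom d : ℝ) * s) / ((Nat.centralBinom d : ℝ) * ((d.factorial : ℝ))^2 * s) := by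
        field_simp
    _ ≤ ((2/Real.sqrt π) * 4^d) / ((Nat.centralBinom d : ℝ) * ((d.factorial : ℝ))^2 * s) := by
        gcongr
    _ = 2/Real.sqrt π * (2^(2*d) / (((2*d).factorial : ℝ) * s)) := by
        rw [hfac, h2]; ring

lemma factor_bd (d : ℕ) {δ : ℝ} (hδ : 0 < δ) :
    (poisKer d δ)^2 ≤ (2/Real.sqrt π) *
      ((Real.exp (-2*δ) * 2^(2*d)) *
        (δ^(2*d) / (((2*d).factorial : ℝ) * Real.sqrt (max (d:ℝ) 1)))) := by
  have hA : (0:ℝ) ≤ Real.exp (-2*δ) * δ^(2*d) := by positivity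
  calc (poisKer d δ)^2
      = (Real.exp (-2*δ) * δ^(2*d)) * (((d.factorial : ℝ))⁻¹)^2 := by
        rw [poisKer, if_pos hδ.le]
        rw [show Real.exp (-δ) * δ ^ d / (d.factorial : ℝ)
            = Real.exp (-δ) * δ ^ d * ((d.factorial : ℝ))⁻¹ by ring]
        rw [mul_pow, mul_pow, ← Real.exp_nat_mul]
        rw [← pow_mul, mul_comm d 2]
        norm_num
    _ ≤ (Real.exp (-2*δ) * δ^(2*d)) *
          (2/Real.sqrt π * (2^(2*d) / (((2*d).factorial : ℝ) * Real.sqrt (max (d:ℝ) 1)))) :=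
        mul_le_mul_of_nonneg_left (key_fac d) hA
    _ = (2/Real.sqrt π) * ((Real.exp (-2*δ) * 2^(2*d)) *
          (δ^(2*d) / (((2*d).factorial : ℝ) * Real.sqrt (max (d:ℝ) 1)))) := by ring

lemma tele_real (k : ℕ) (ys : Fin (k+2) → ℝ) :
    ∑ i : Fin (k+1), (ys i.succ - ys i.castSucc) = ys (Fin.last (k+1)) - ys 0 := by
  have key : ∀ (f : ℕ → ℝ), (∀ i : Fin (k+1), ys i.succ - ys i.castSucc = f (i.val+1) - f i.val) →
      f (k+1) = ys (Fin.last (k+1)) → f 0 = ys 0 →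
      ∑ i : Fin (k+1), (ys i.succ - ys i.castSucc) = ys (Fin.last (k+1)) - ys 0 := by
    intro f h1 h2 h3
    rw [Finset.sum_congr rfl (fun i _ => h1 i)]
    rw [Fin.sum_univ_eq_sum_range (fun j => f (j+1) - f j), Finset.sum_range_sub, h2, h3]
  refine key (fun j => ys ⟨min j (k+1), by omega⟩) (fun i => ?_) ?_ ?_
  · have hi := i.isLt
    congr 1
    · congr 1
      apply Fin.ext
      simp [Fin.val_succ]
      omega
    · congr 1
      apply Fin.ext
      simp [Fin.coe_castSucc]
  · show ys ⟨min (k+1) (k+1), _⟩ = ys (Fin.last (k+1))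
    congr 1
    apply Fin.ext
    simp [Fin.last]
  · show ys ⟨min 0 (k+1), _⟩ = ys 0
    congr 1

lemma tele_nat_range (f : ℕ → ℕ) (hf : ∀ j, f j ≤ f (j+1)) (N : ℕ) :
    ∑ j ∈ Finset.range N, (f (j+1) - f j) = f N - f 0 := by
  induction N with
  | zero => simp
  | succ N ih =>
    rw [Finset.sum_range_succ, ih]
    have hm : Monotone f := monotone_nat_of_le_succ hf
    have h0N : f 0 ≤ f N := hm (Nat.zero_le N)
    have := hf N
    omega

lemma tele_nat (k : ℕ) (ns : Fin (k+2) → ℕ) (h : Monotone ns) :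
    ∑ i : Fin (k+1), (ns i.succ - ns i.castSucc) = ns (Fin.last (k+1)) - ns 0 := by
  set f : ℕ → ℕ := fun j => ns ⟨min j (k+1), by omega⟩ with hfdef
  have hf : ∀ j, f j ≤ f (j+1) := by
    intro j
    apply h
    simp only [Fin.le_def]
    omega
  have h1 : ∀ i : Fin (k+1), ns i.succ - ns i.castSucc = f (i.val+1) - f i.val := by
    intro i
    have hi := i.isLt
    congr 1
    · show _ = ns _
      congr 1
      apply Fin.ext
      simp [Fin.val_succ]
      omega
    · show _ = ns _
      congr 1
      apply Fin.ext
      simp [Fin.coe_castSucc]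
  have h2 : f (k+1) = ns (Fin.last (k+1)) := by
    show ns _ = _
    congr 1
    apply Fin.ext
    simp [Fin.last]
  have h3 : f 0 = ns 0 := by show ns _ = _; congr 1
  rw [Finset.sum_congr rfl (fun i _ => h1 i)]
  rw [Fin.sum_univ_eq_sum_range (fun j => f (j+1) - f j), tele_nat_range f hf, h2, h3]

theorem stmt6 :
    ∃ C : ℝ, 0 < C ∧
      ∀ (k m n : ℕ), 0 < k → m ≤ n →
        ∀ (x y : ℝ), x < y →
          ∀ (ns : Fin (k + 2) → ℕ) (ys : Fin (k + 2) → ℝ),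
            Monotone ns → ns 0 = m → ns (Fin.last (k + 1)) = n →
            StrictMono ys → ys 0 = x → ys (Fin.last (k + 1)) = y →
            (∏ i : Fin (k + 1),
                (poisKer (ns i.succ - ns i.castSucc) (ys i.succ - ys i.castSucc)) ^ 2) ≤
              C ^ k *
                (Real.exp (-2 * (y - x)) * 2 ^ (2 * (n - m)) /
                  Real.pi ^ (((k : ℝ) + 1) / 2)) *
                ∏ i : Fin (k + 1),
                  (ys i.succ - ys i.castSucc) ^ (2 * (ns i.succ - ns i.castSucc)) /
                    ((Nat.factorial (2 * (ns i.succ - ns i.castSucc)) : ℝ) *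
                      Real.sqrt (max ((ns i.succ - ns i.castSucc : ℕ) : ℝ) 1)) := by
  refine ⟨4, by norm_num, ?_⟩
  intro k m n hk hmn x y hxy ns ys hmono h0 hlast hys hy0 hylast
  have hδ : ∀ i : Fin (k+1), 0 < ys i.succ - ys i.castSucc := by
    intro i
    have := hys (Fin.castSucc_lt_succ : i.castSucc < i.succ)
    linarith
  set D : Fin (k+1) → ℕ := fun i => ns i.succ - ns i.castSucc with hD
  set Δ : Fin (k+1) → ℝ := fun i => ys i.succ - ys i.castSucc with hΔ
  set G : Fin (k+1) → ℝ := fun i =>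
    (Δ i) ^ (2 * D i) / ((Nat.factorial (2 * D i) : ℝ) * Real.sqrt (max ((D i : ℕ) : ℝ) 1)) with hG
  set E : Fin (k+1) → ℝ := fun i => Real.exp (-2 * Δ i) * 2 ^ (2 * D i) with hE
  have hpi : (0:ℝ) < Real.sqrt π := Real.sqrt_pos.2 Real.pi_pos
  have hGnn : ∀ i ∈ Finset.univ, (0:ℝ) ≤ G i := by
    intro i _
    have := (hδ i)
    positivity
  have hEprod : ∏ i : Fin (k+1), E i = Real.exp (-2 * (y - x)) * 2 ^ (2 * (n - m)) := by
    rw [hE]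
    rw [Finset.prod_mul_distrib]
    congr 1
    · rw [← Real.exp_sum]
      congr 1
      rw [← Finset.mul_sum, hΔ, tele_real k ys, hylast, hy0]
    · rw [Finset.prod_pow_eq_pow_sum]
      congr 1
      rw [← Finset.mul_sum, hD, tele_nat k ns hmono, hlast, h0]
  have hpow : (Real.sqrt π) ^ (k+1) = π ^ (((k:ℝ) + 1) / 2) := by
    rw [Real.sqrt_eq_rpow, ← Real.rpow_natCast (π ^ ((1:ℝ)/2)) (k+1),
      ← Real.rpow_mul Real.pi_pos.le]
    congr 1
    push_cast
    ring
  have hc : ((2:ℝ)/Real.sqrt π) ^ (k+1) ≤ 4 ^ k / π ^ (((k:ℝ) + 1) / 2) := by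
    rw [div_pow, ← hpow]
    have h24 : (2:ℝ)^(k+1) ≤ 4^k := by
      calc (2:ℝ)^(k+1) ≤ 2^(2*k) := by
            apply pow_le_pow_right₀ (by norm_num)
            omega
        _ = 4^k := by rw [pow_mul]; norm_num
    exact (div_le_div_iff_of_pos_right (pow_pos hpi _)).2 h24
  calc (∏ i : Fin (k+1), (poisKer (D i) (Δ i)) ^ 2)
      ≤ ∏ i : Fin (k+1), (2/Real.sqrt π) * (E i * G i) := by
        apply Finset.prod_le_prod (fun i _ => sq_nonneg _)
        intro i _
        exact factor_bd (D i) (hδ i)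
    _ = ((2:ℝ)/Real.sqrt π) ^ (k+1) * ((∏ i : Fin (k+1), E i) * ∏ i : Fin (k+1), G i) := by
        rw [Finset.prod_mul_distrib, Finset.prod_const, Finset.card_univ, Fintype.card_fin,
          Finset.prod_mul_distrib]
    _ = ((2:ℝ)/Real.sqrt π) ^ (k+1) *
          ((Real.exp (-2 * (y - x)) * 2 ^ (2 * (n - m))) * ∏ i : Fin (k+1), G i) := by
        rw [hEprod]
    _ ≤ (4 ^ k / π ^ (((k:ℝ) + 1) / 2)) *
          ((Real.exp (-2 * (y - x)) * 2 ^ (2 * (n - m))) * ∏ i : Fin (k+1), G i) := by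
        apply mul_le_mul_of_nonneg_right hc
        have : (0:ℝ) ≤ ∏ i : Fin (k+1), G i := Finset.prod_nonneg hGnn
        positivity
    _ = 4 ^ k * (Real.exp (-2 * (y - x)) * 2 ^ (2 * (n - m)) / π ^ (((k:ℝ) + 1) / 2)) *
          ∏ i : Fin (k+1), G i := by ring
end

section
/- Let (X(λ))_{λ ∈ ℝ} be a real-valued stochastic process that is increment-stationary (i.e., for all λ*, the law of (X(λ+λ*) − X(λ*))_λ equals the law of (X(λ) − X(0))_λ), has nondecreasing paths in λ, is almost surely continuous in λ, and satisfies E[X(1) − X(0)] < ∞. Then for every ε > 0, lim_{n→∞} n · P(X(1/n) − X(0) > ε) = 0. -/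
open MeasureTheory ProbabilityTheory Filter

theorem stmt9 {Ω : Type*} [MeasureSpace Ω] [IsProbabilityMeasure (ℙ : Measure Ω)]
    (X : ℝ → Ω → ℝ) (hmeas : ∀ lam : ℝ, Measurable (X lam))
    -- increment stationarity: the law of (X(λ+λ*) − X(λ*))_λ does not depend on λ*
    (hstat : ∀ lamStar : ℝ,
      Measure.map (fun ω => fun lam : ℝ => X (lam + lamStar) ω - X lamStar ω) ℙ =
        Measure.map (fun ω => fun lam : ℝ => X lam ω - X 0 ω) ℙ)
    -- nondecreasing paths
    (hmono : ∀ᵐ ω ∂(ℙ : Measure Ω), Monotone fun lam => X lam ω)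
    -- almost surely continuous paths
    (hcont : ∀ᵐ ω ∂(ℙ : Measure Ω), Continuous fun lam => X lam ω)
    -- E[X(1) − X(0)] < ∞
    (hint : Integrable (fun ω => X 1 ω - X 0 ω) (ℙ : Measure Ω)) :
    ∀ ε : ℝ, 0 < ε →
      Tendsto (fun n : ℕ =>
          (n : ℝ) * ((ℙ : Measure Ω) {ω | ε < X (1 / (n : ℝ)) ω - X 0 ω}).toReal)
        atTop (nhds 0) := by
  intro ε hε
  have hXmeas : ∀ a b : ℝ, Measurable (fun ω => X a ω - X b ω) :=
    fun a b => (hmeas a).sub (hmeas b)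
  have hA : ∀ a b : ℝ, MeasurableSet {ω | ε < X a ω - X b ω} :=
    fun a b => measurableSet_lt measurable_const (hXmeas a b)
  have hdivle : ∀ a b c : ℝ, 0 ≤ c → a ≤ b → a / c ≤ b / c := by
    intro a b c hc hab
    gcongr
  -- stationarity for a single increment
  have hkey : ∀ s t : ℝ,
      (ℙ : Measure Ω) {ω | ε < X (s + t) ω - X t ω} =
      (ℙ : Measure Ω) {ω | ε < X s ω - X 0 ω} := by
    intro s t
    have hproc : Measurable (fun ω => fun lam : ℝ => X (lam + t) ω - X t ω) :=
      measurable_pi_lambda _ (fun lam => hXmeas _ _)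
    have hproc0 : Measurable (fun ω => fun lam : ℝ => X lam ω - X 0 ω) :=
      measurable_pi_lambda _ (fun lam => hXmeas _ _)
    have hev : Measurable (fun f : ℝ → ℝ => f s) := measurable_pi_apply s
    have h1 := congrArg (Measure.map (fun f : ℝ → ℝ => f s)) (hstat t)
    rw [Measure.map_map hev hproc, Measure.map_map hev hproc0] at h1
    have h2 := congrArg (fun μ : Measure ℝ => μ (Set.Ioi ε)) h1
    rw [Measure.map_apply (hev.comp hproc) measurableSet_Ioi,
      Measure.map_apply (hev.comp hproc0) measurableSet_Ioi] at h2
    exact h2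
  -- the counting process
  set g : ℕ → Ω → ℝ := fun n ω => ∑ i ∈ Finset.range n,
    Set.indicator {ω' | ε < X (((i : ℝ) + 1) / n) ω' - X ((i : ℝ) / n) ω'}
      (fun _ => (1 : ℝ)) ω with hg
  have hAset : ∀ n i : ℕ, MeasurableSet
      {ω' | ε < X (((i : ℝ) + 1) / (n:ℝ)) ω' - X ((i : ℝ) / n) ω'} := fun n i => hA _ _
  have hInd : ∀ n i : ℕ, Integrable
      (Set.indicator {ω' | ε < X (((i : ℝ) + 1) / (n:ℝ)) ω' - X ((i : ℝ) / n) ω'}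
        (fun _ => (1 : ℝ))) (ℙ : Measure Ω) :=
    fun n i => (integrable_const 1).indicator (hAset n i)
  -- integral of g n equals n * P
  have hInt : ∀ n : ℕ, ∫ ω, g n ω =
      (n : ℝ) * ((ℙ : Measure Ω) {ω | ε < X (1 / (n : ℝ)) ω - X 0 ω}).toReal := by
    intro n
    rw [hg]
    rw [integral_finset_sum _ (fun i _ => hInd n i)]
    have heach : ∀ i ∈ Finset.range n,
        ∫ ω, Set.indicator {ω' | ε < X (((i : ℝ) + 1) / n) ω' - X ((i : ℝ) / n) ω'}
          (fun _ => (1 : ℝ)) ω =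
        ((ℙ : Measure Ω) {ω | ε < X (1 / (n : ℝ)) ω - X 0 ω}).toReal := by
      intro i _
      rw [integral_indicator_const (1 : ℝ) (hAset n i)]
      rw [smul_eq_mul, mul_one]
      refine congrArg ENNReal.toReal ?_
      have := hkey (1 / (n:ℝ)) ((i : ℝ) / n)
      rw [← this]
      congr 2
      rw [← add_div, add_comm]
    rw [Finset.sum_congr rfl heach, Finset.sum_const, Finset.card_range, nsmul_eq_mul]
  -- nonnegativity of g
  have hgnonneg : ∀ n ω, 0 ≤ g n ω := by
    intro n ω
    refine Finset.sum_nonneg fun i _ => ?_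
    exact Set.indicator_nonneg (fun _ _ => zero_le_one) ω
  -- pathwise bound for monotone paths
  have hbound : ∀ ω, Monotone (fun lam => X lam ω) → ∀ n : ℕ,
      ε * g n ω ≤ X 1 ω - X 0 ω := by
    intro ω hm n
    rcases Nat.eq_zero_or_pos n with h0 | hn
    · subst h0
      simp only [hg, Finset.range_zero, Finset.sum_empty, mul_zero]
      exact sub_nonneg.2 (hm zero_le_one)
    · have hstep : ε * g n ω ≤ ∑ i ∈ Finset.range n,
          (X (((i : ℝ) + 1) / n) ω - X ((i : ℝ) / n) ω) := by
        rw [hg, Finset.mul_sum]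
        refine Finset.sum_le_sum fun i _ => ?_
        by_cases hmem : ω ∈ {ω' | ε < X (((i : ℝ) + 1) / n) ω' - X ((i : ℝ) / n) ω'}
        · rw [Set.indicator_of_mem hmem, mul_one]
          exact le_of_lt hmem
        · rw [Set.indicator_of_notMem hmem, mul_zero]
          refine sub_nonneg.2 (hm (hdivle _ _ _ (by positivity) (by linarith)))
      refine hstep.trans ?_
      have hn0 : (n : ℝ) ≠ 0 := Nat.cast_ne_zero.2 hn.ne'
      have htel : ∑ i ∈ Finset.range n,
          (X (((i : ℝ) + 1) / n) ω - X ((i : ℝ) / n) ω) =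
          X 1 ω - X 0 ω := by
        rw [show ∑ i ∈ Finset.range n, (X (((i : ℝ) + 1) / n) ω - X ((i : ℝ) / n) ω)
            = ∑ i ∈ Finset.range n, ((fun k : ℕ => X ((k : ℝ) / n) ω) (i + 1)
              - (fun k : ℕ => X ((k : ℝ) / n) ω) i)
          from Finset.sum_congr rfl fun i _ => by push_cast; ring_nf,
          Finset.sum_range_sub (fun k : ℕ => X ((k : ℝ) / n) ω) n]
        simp [div_self hn0]
      rw [htel]
  -- a.e. pointwise convergence to 0
  have hlim : ∀ᵐ ω ∂(ℙ : Measure Ω),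
      Tendsto (fun n => g n ω) atTop (nhds 0) := by
    filter_upwards [hmono, hcont] with ω hm hc
    have hcOn : ContinuousOn (fun lam => X lam ω) (Set.Icc (0:ℝ) 1) := hc.continuousOn
    have hu : UniformContinuousOn (fun lam => X lam ω) (Set.Icc (0:ℝ) 1) :=
      isCompact_Icc.uniformContinuousOn_of_continuous hcOn
    rw [Metric.uniformContinuousOn_iff] at hu
    obtain ⟨δ, hδ, hδ'⟩ := hu ε hε
    have hev : ∀ᶠ n : ℕ in atTop, g n ω = 0 := by
      filter_upwards [eventually_ge_atTop 1,
        tendsto_one_div_atTop_nhds_zero_nat.eventually_lt_const hδ] with n hn1 hnδ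
      rw [hg]
      refine Finset.sum_eq_zero fun i hi => ?_
      rw [Finset.mem_range] at hi
      have hn0 : (0:ℝ) < n := by exact_mod_cast Nat.lt_of_lt_of_le Nat.zero_lt_one hn1
      have hx1 : ((i : ℝ) + 1) / n ∈ Set.Icc (0:ℝ) 1 := by
        constructor
        · positivity
        · rw [div_le_one hn0]
          have : (i : ℝ) + 1 ≤ n := by exact_mod_cast Nat.succ_le_of_lt hi
          linarith
      have hx0 : (i : ℝ) / n ∈ Set.Icc (0:ℝ) 1 := by
        constructor
        · positivity
        · rw [div_le_one hn0]
          have : (i : ℝ) ≤ n := by exact_mod_cast le_of_lt hi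
          linarith
      have hdist : dist (((i : ℝ) + 1) / n) ((i : ℝ) / n) < δ := by
        rw [Real.dist_eq]
        have : ((i : ℝ) + 1) / n - (i : ℝ) / n = 1 / n := by
          field_simp
          ring
        rw [this, abs_of_pos (by positivity)]
        exact hnδ
      have := hδ' _ hx1 _ hx0 hdist
      rw [Real.dist_eq] at this
      have hinc : X (((i : ℝ) + 1) / n) ω - X ((i : ℝ) / n) ω ≤ ε := by
        have hge : 0 ≤ X (((i : ℝ) + 1) / n) ω - X ((i : ℝ) / n) ω :=
          sub_nonneg.2 (hm (hdivle _ _ _ (by positivity) (by linarith)))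
        calc X (((i : ℝ) + 1) / n) ω - X ((i : ℝ) / n) ω
            ≤ |X (((i : ℝ) + 1) / n) ω - X ((i : ℝ) / n) ω| := le_abs_self _
          _ ≤ ε := le_of_lt this
      exact Set.indicator_of_notMem (by simpa using not_lt.2 hinc) _
    exact Tendsto.congr' (hev.mono fun n h => h.symm) tendsto_const_nhds
  -- dominated convergence
  have hdom : Tendsto (fun n => ∫ ω, g n ω) atTop (nhds (∫ _ω : Ω, (0:ℝ))) := by
    refine tendsto_integral_of_dominated_convergence
      (fun ω => (X 1 ω - X 0 ω) / ε) ?_ (hint.div_const ε) ?_ hlim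
    · intro n
      refine (Finset.measurable_sum _ fun i _ => ?_).aestronglyMeasurable
      exact (measurable_const.indicator (hAset n i))
    · intro n
      filter_upwards [hmono] with ω hm
      rw [Real.norm_eq_abs, abs_of_nonneg (hgnonneg n ω)]
      rw [le_div_iff₀ hε]
      calc g n ω * ε = ε * g n ω := mul_comm _ _
        _ ≤ X 1 ω - X 0 ω := hbound ω hm n
  rw [integral_zero] at hdom
  exact hdom.congr fun n => hInt n
end

section
/- For t > 0 and x, y real, define p_N(t,y|s,x) = √N · q(⌊tN⌋ − ⌊sN⌋, (t−s)N + √N(y−x)) where q(n,z) = e^{−z} zⁿ/n! for n ≥ 0, z ≥ 0 (and 0 otherwise). Then for all x, y ∈ ℝ and t > s, p_N(t,y|s,x) → ρ(t−s, y−x) as N → ∞, where ρ(t,x) = (2πt)^{−1/2} e^{−x²/(2t)} is the heat kernel. -/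
open Real Filter

/-- Poisson kernel on integers: `q(n,z) = e^{−z} zⁿ/n!` for `n ≥ 0, z ≥ 0`, else `0`. -/
noncomputable def poisKerZ (n : ℤ) (z : ℝ) : ℝ :=
  if 0 ≤ n ∧ 0 ≤ z then Real.exp (-z) * z ^ n.toNat / (Nat.factorial n.toNat) else 0

/-- The rescaled transition function
`p_N(t,y|s,x) = √N q(⌊tN⌋ − ⌊sN⌋, (t−s)N + √N (y−x))`. -/
noncomputable def pN (N : ℕ) (t y s x : ℝ) : ℝ :=
  Real.sqrt N * poisKerZ (⌊t * N⌋ - ⌊s * N⌋) ((t - s) * N + Real.sqrt N * (y - x))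

/-- The heat kernel `ρ(t,x) = (2πt)^{−1/2} e^{−x²/(2t)} 1{t>0}`. -/
noncomputable def heatKer (t x : ℝ) : ℝ :=
  if 0 < t then (Real.sqrt (2 * Real.pi * t))⁻¹ * Real.exp (-x ^ 2 / (2 * t)) else 0

open Topology

/-!
Write `u = (z - m)/m`. Stirling's formula turns `√m · q(m, z)` into
`(√2 · stirlingSeq m)⁻¹ · exp (m (log (1 + u) - u))`, and the second-order Taylor bound for
`log (1 + u)` gives `m (log (1 + u) - u) → -a²/2` whenever `u → 0` and `m u² → a²`: this is the
local central limit theorem for the Poisson kernel, with limit `ρ(1, a)`. For `p_N` take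
`m = ⌊tN⌋ - ⌊sN⌋`, which is within `1` of `(t - s) N`; then `(z - m)/√m → (y - x)/√(t - s)`,
and the remaining factor `√N / √m → (t - s)^{-1/2}` is the diffusive scaling of the heat kernel.
-/

theorem abs_floor_sub_floor_sub_sub_lt_one {R : Type*} [Ring R] [LinearOrder R]
    [IsStrictOrderedRing R] [FloorRing R] (a b : R) :
    |((⌊a⌋ - ⌊b⌋ : ℤ) : R) - (a - b)| < 1 := by
  have h : ((⌊a⌋ - ⌊b⌋ : ℤ) : R) - (a - b) = Int.fract b - Int.fract a := by
    simp only [Int.fract]; push_cast; abel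
  rw [h, abs_sub_lt_iff]
  exact ⟨(sub_le_self _ (Int.fract_nonneg a)).trans_lt (Int.fract_lt_one b),
    (sub_le_self _ (Int.fract_nonneg b)).trans_lt (Int.fract_lt_one a)⟩

theorem tendsto_div_atTop_nhds_zero_of_abs_le {α : Type*} {l : Filter α} {f g : α → ℝ} {C : ℝ}
    (hf : ∀ᶠ i in l, |f i| ≤ C) (hg : Tendsto g l atTop) :
    Tendsto (fun i => f i / g i) l (𝓝 0) :=
  tendsto_bdd_div_atTop_nhds_zero (hf.mono fun _ h => (abs_le.1 h).1)
    (hf.mono fun _ h => (abs_le.1 h).2) hg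

section LatticeApproximation

variable {τ C : ℝ} {f : ℕ → ℝ}

theorem tendsto_div_natCast_of_abs_sub_mul_le (hf : ∀ᶠ N : ℕ in atTop, |f N - τ * N| ≤ C) :
    Tendsto (fun N : ℕ => f N / N) atTop (𝓝 τ) := by
  have h := (tendsto_div_atTop_nhds_zero_of_abs_le hf tendsto_natCast_atTop_atTop).const_add τ
  rw [add_zero] at h
  refine h.congr' ?_
  filter_upwards [eventually_ne_atTop 0] with N hN
  field_simp
  ring

theorem tendsto_atTop_of_abs_sub_mul_le (hτ : 0 < τ) (hf : ∀ᶠ N : ℕ in atTop, |f N - τ * N| ≤ C) :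
    Tendsto f atTop atTop := by
  refine tendsto_atTop_mono' atTop ?_
    (tendsto_atTop_add_const_right atTop (-C) (tendsto_natCast_atTop_atTop.const_mul_atTop hτ))
  filter_upwards [hf] with N hN
  linarith [(abs_le.1 hN).1]

theorem tendsto_sub_div_sqrt_of_abs_sub_mul_le (hτ : 0 < τ)
    (hf : ∀ᶠ N : ℕ in atTop, |f N - τ * N| ≤ C) (w : ℝ) :
    Tendsto (fun N : ℕ => (τ * N + √N * w - f N) / √(f N)) atTop (𝓝 (w / √τ)) := by
  have hsqrt : Tendsto (fun N : ℕ => √(N : ℝ)) atTop atTop :=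
    tendsto_sqrt_atTop.comp tendsto_natCast_atTop_atTop
  have h := ((tendsto_div_atTop_nhds_zero_of_abs_le hf hsqrt).const_sub w).div
    (tendsto_div_natCast_of_abs_sub_mul_le hf).sqrt (sqrt_ne_zero'.2 hτ)
  rw [sub_zero] at h
  refine h.congr' ?_
  filter_upwards [eventually_gt_atTop 0,
    (tendsto_atTop_of_abs_sub_mul_le hτ hf).eventually_gt_atTop 0] with N hN hfN
  have hsN : √(N : ℝ) ≠ 0 := sqrt_ne_zero'.2 (Nat.cast_pos.2 hN)
  simp only [Pi.div_apply, sqrt_div hfN.le]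
  field_simp
  ring

end LatticeApproximation

theorem sqrt_mul_poisKerZ_eq {m : ℕ} {z : ℝ} (hm : m ≠ 0) (hz : 0 < z) :
    √m * poisKerZ m z =
      (√2 * Stirling.stirlingSeq m)⁻¹ * exp (m * (log (z / m) - (z / m - 1))) := by
  have hm' : (0 : ℝ) < m := Nat.cast_pos.2 (Nat.pos_of_ne_zero hm)
  have hpow : z ^ m = exp (m * log (z / m)) * (m : ℝ) ^ m := by
    rw [exp_nat_mul, exp_log (div_pos hz hm'), ← mul_pow, div_mul_cancel₀ _ hm'.ne']
  have hexp :
      exp (m * (log (z / m) - (z / m - 1))) = exp (m * log (z / m)) * exp (-z) * exp m := by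
    rw [← exp_add, ← exp_add]; congr 1; field_simp; ring
  rw [poisKerZ, if_pos ⟨Nat.cast_nonneg m, hz.le⟩, Int.toNat_natCast, Stirling.stirlingSeq, hexp,
    hpow, sqrt_mul zero_le_two, div_pow, ← exp_one_pow]
  field_simp

theorem tendsto_mul_log_one_add_sub_self {α : Type*} {l : Filter α} {m u : α → ℝ} {b : ℝ}
    (hu : Tendsto u l (𝓝 0)) (hb : Tendsto (fun i => m i * u i ^ 2) l (𝓝 b)) :
    Tendsto (fun i => m i * (log (1 + u i) - u i)) l (𝓝 (-(b / 2))) := by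
  have habs : Tendsto (fun i => |u i|) l (𝓝 0) := by simpa using hu.abs
  have hbound : Tendsto (fun i => |m i * u i ^ 2| * |u i| / (1 - |u i|)) l (𝓝 0) := by
    have h := (hb.abs.mul habs).div (tendsto_const_nhds.sub habs) (by norm_num : (1 : ℝ) - 0 ≠ 0)
    rwa [mul_zero, zero_div] at h
  have hrem : Tendsto (fun i => m i * (log (1 + u i) - u i) + m i * u i ^ 2 / 2) l (𝓝 0) := by
    refine squeeze_zero_norm' ?_ hbound
    filter_upwards [habs.eventually_lt_const one_pos] with i hi
    have key : |log (1 + u i) - u i + u i ^ 2 / 2| ≤ |u i| ^ 3 / (1 - |u i|) := by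
      have h := abs_log_sub_add_sum_range_le (x := -u i) (by rwa [abs_neg]) 2
      norm_num [Finset.sum_range_succ] at h
      convert h using 2
      ring
    calc ‖m i * (log (1 + u i) - u i) + m i * u i ^ 2 / 2‖
        = |m i| * |log (1 + u i) - u i + u i ^ 2 / 2| := by
          rw [norm_eq_abs, ← abs_mul]; congr 1; ring
      _ ≤ |m i| * (|u i| ^ 3 / (1 - |u i|)) := by gcongr
      _ = |m i * u i ^ 2| * |u i| / (1 - |u i|) := by
          rw [abs_mul, abs_pow]; ring
  simpa using hrem.sub (hb.div_const 2)

theorem tendsto_sqrt_mul_poisKerZ {α : Type*} {l : Filter α} {m : α → ℕ} {z : α → ℝ} {a : ℝ}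
    (hm : Tendsto m l atTop) (hz : Tendsto (fun i => (z i - m i) / √(m i)) l (𝓝 a)) :
    Tendsto (fun i => √(m i) * poisKerZ (m i) (z i)) l (𝓝 (heatKer 1 a)) := by
  set v := fun i => (z i - m i) / √(m i)
  set u := fun i => v i / √(m i)
  have hsqrt : Tendsto (fun i => √(m i : ℝ)) l atTop :=
    tendsto_sqrt_atTop.comp (tendsto_natCast_atTop_atTop.comp hm)
  have hu : Tendsto u l (𝓝 0) := hz.div_atTop hsqrt
  have hmu : (fun i => (m i : ℝ) * u i ^ 2) = fun i => v i ^ 2 := by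
    ext i
    rcases eq_or_ne (m i) 0 with h | h
    · simp [u, v, h]
    · have hm0 : (m i : ℝ) ≠ 0 := Nat.cast_ne_zero.2 h
      simp only [u, div_pow, sq_sqrt (Nat.cast_nonneg _)]
      field_simp
  have hlog := tendsto_mul_log_one_add_sub_self hu (hmu ▸ hz.pow 2)
  have hlim := ((Stirling.tendsto_stirlingSeq_sqrt_pi.comp hm).const_mul √2).inv₀
    (by positivity) |>.mul ((continuous_exp.tendsto _).comp hlog)
  have hval : heatKer 1 a = (√2 * √π)⁻¹ * exp (-(a ^ 2 / 2)) := by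
    rw [heatKer, if_pos one_pos, mul_one, mul_one, sqrt_mul zero_le_two, neg_div]
  rw [hval]
  refine hlim.congr' ?_
  filter_upwards [hm.eventually_ne_atTop 0, hu.eventually (lt_mem_nhds neg_one_lt_zero)]
    with i him hui
  have hm' : (0 : ℝ) < m i := Nat.cast_pos.2 (Nat.pos_of_ne_zero him)
  have hzm : z i / m i = 1 + u i := by
    simp only [u, v, div_div, mul_self_sqrt hm'.le]
    field_simp
    ring
  have hz : 0 < z i := (div_pos_iff_of_pos_right hm').1 (by rw [hzm]; linarith)
  rw [sqrt_mul_poisKerZ_eq him hz, hzm, add_sub_cancel_left]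
  rfl

theorem heatKer_eq_inv_sqrt_mul_heatKer_one {t : ℝ} (ht : 0 < t) (x : ℝ) :
    heatKer t x = (√t)⁻¹ * heatKer 1 (x / √t) := by
  rw [heatKer, heatKer, if_pos ht, if_pos one_pos, div_pow, sq_sqrt ht.le, mul_one, mul_one,
    sqrt_mul (by positivity) t, mul_inv, neg_div, neg_div, div_div, mul_comm t 2]
  ring

theorem stmt11 (s t x y : ℝ) (hst : s < t) :
    Tendsto (fun N : ℕ => pN N t y s x) atTop (nhds (heatKer (t - s) (y - x))) := by
  have hτ : 0 < t - s := sub_pos.2 hst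
  set n : ℕ → ℤ := fun N => ⌊t * N⌋ - ⌊s * N⌋
  have hn : ∀ N : ℕ, |(n N : ℝ) - (t - s) * N| ≤ 1 := fun N => by
    simpa only [n, sub_mul] using (abs_floor_sub_floor_sub_sub_lt_one (t * N) (s * N)).le
  set m : ℕ → ℕ := fun N => (n N).toNat
  have hmn : ∀ᶠ N in atTop, (m N : ℤ) = n N := by
    filter_upwards [(tendsto_natCast_atTop_atTop.const_mul_atTop hτ).eventually_ge_atTop 1]
      with N hN
    refine Int.toNat_of_nonneg ((Int.cast_nonneg_iff (R := ℝ)).1 ?_)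
    linarith [(abs_le.1 (hn N)).1]
  have hm : ∀ᶠ N in atTop, |(m N : ℝ) - (t - s) * N| ≤ 1 := by
    filter_upwards [hmn] with N hN
    rw [← Int.cast_natCast, hN]
    exact hn N
  have hm_top := tendsto_atTop_of_abs_sub_mul_le hτ hm
  have hclt := tendsto_sqrt_mul_poisKerZ (tendsto_natCast_atTop_iff.1 hm_top)
    (tendsto_sub_div_sqrt_of_abs_sub_mul_le hτ hm (y - x))
  rw [heatKer_eq_inv_sqrt_mul_heatKer_one hτ]
  refine (((tendsto_div_natCast_of_abs_sub_mul_le hm).sqrt.inv₀ (sqrt_ne_zero'.2 hτ)).mul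
    hclt).congr' ?_
  filter_upwards [hmn, hm_top.eventually_gt_atTop 0] with N hN hmN
  rw [pN, show ⌊t * N⌋ - ⌊s * N⌋ = n N from rfl, ← hN, sqrt_div hmN.le, inv_div]
  field_simp
end
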